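/- If H is obtained from a chain graph G by a feasible merging of two components L and R, then H is a chain graph and induces the same independence model as G. -/
import Mathlib


/-- A hybrid graph over a vertex set `V`: it has directed edges (`dir`) and
undirected edges (`undir`, stored as a symmetric irreflexive relation). -/
structure HybridGraph (V : Type) where
  dir : V → V → Prop
  undir : V → V → Prop
  dir_irrefl : ∀ x, ¬ dir x x
  undir_irrefl : ∀ x, ¬ undir x x
  undir_symm : ∀ x y, undir x y → undir y x

namespace HybridGraph

variable {V : Type}

/-- Two nodes are adjacent if joined by a directed or undirected edge. -/
def adj (G : HybridGraph V) (x y : V) : Prop :=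
  G.dir x y ∨ G.dir y x ∨ G.undir x y

/-- One step of a descending route: `x − y` or `x → y`. -/
def descStep (G : HybridGraph V) (x y : V) : Prop := G.dir x y ∨ G.undir x y

/-- `y` is a descendant of `x`: there is a descending route from `x` to `y`
(routes of length zero allowed). -/
def descendant (G : HybridGraph V) : V → V → Prop :=
  Relation.ReflTransGen G.descStep

/-- There is an undirected route between `x` and `y` (length zero allowed). -/
def uconn (G : HybridGraph V) : V → V → Prop :=
  Relation.ReflTransGen G.undir

/-- A chain is modeled by a function `f : V → ℕ` assigning each node the index of
its block.  `G` is consistent with the chain `f` if directed edges go strictly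
left-to-right and undirected edges stay within a block. -/
def ConsistentWith (G : HybridGraph V) (f : V → ℕ) : Prop :=
  (∀ x y, G.dir x y → f x < f y) ∧ (∀ x y, G.undir x y → f x = f y)

/-- A chain graph is a hybrid graph consistent with some chain. -/
def IsChainGraph (G : HybridGraph V) : Prop := ∃ f : V → ℕ, G.ConsistentWith f

/-- The component (maximal undirected-connected set) containing `x`. -/
def component (G : HybridGraph V) (x : V) : Set V := {y | G.uconn x y}

def IsComponent (G : HybridGraph V) (C : Set V) : Prop := ∃ x, C = G.component x

/-- The descendants of a set of nodes. -/
def descendantsOf (G : HybridGraph V) (S : Set V) : Set V :=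
  {y | ∃ x ∈ S, G.descendant x y}

/-- A component is terminal if its set of descendants is exactly itself. -/
def IsTerminal (G : HybridGraph V) (C : Set V) : Prop := G.descendantsOf C = C

/-- Parents of a set of nodes. -/
def Pa (G : HybridGraph V) (S : Set V) : Set V := {x | ∃ y ∈ S, G.dir x y}

/-- Neighbors of a set of nodes. -/
def nbr (G : HybridGraph V) (S : Set V) : Set V := {x | ∃ y ∈ S, G.undir x y}

/-- Boundary of a node: parents together with neighbors. -/
def Bd (G : HybridGraph V) (x : V) : Set V := {y | G.dir y x ∨ G.undir y x}

inductive EdgeKind | fwd | bwd | und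
deriving DecidableEq

/-- A route in `G` of length `n`: nodes `φ 0, …, φ n`, where the `i`-th edge is
directed forwards, directed backwards, or undirected according to `kind i`. -/
structure Route (G : HybridGraph V) where
  n : ℕ
  φ : ℕ → V
  kind : ℕ → EdgeKind
  valid : ∀ i < n,
    (kind i = EdgeKind.fwd → G.dir (φ i) (φ (i+1))) ∧
    (kind i = EdgeKind.bwd → G.dir (φ (i+1)) (φ i)) ∧
    (kind i = EdgeKind.und → G.undir (φ i) (φ (i+1)))

namespace Route

variable {G : HybridGraph V}

/-- Positions `a ≤ k ≤ b` form a collider section of the route: a maximal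
undirected subroute entered by an arrowhead on both sides. -/
def ColliderSec (ρ : Route G) (a b : ℕ) : Prop :=
  a ≤ b ∧ b < ρ.n ∧ 0 < a ∧
  (∀ i, a ≤ i → i < b → ρ.kind i = EdgeKind.und) ∧
  ρ.kind (a-1) = EdgeKind.fwd ∧ ρ.kind b = EdgeKind.bwd

/-- Position `k` lies in a collider section of the route. -/
def ColliderPos (ρ : Route G) (k : ℕ) : Prop :=
  ∃ a b, a ≤ k ∧ k ≤ b ∧ ρ.ColliderSec a b

/-- A route is `Z`-active when every collider section has a node in `Z` and every
non-collider section has no node in `Z`. -/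
def ZActive (ρ : Route G) (Z : Set V) : Prop :=
  (∀ a b, ρ.ColliderSec a b → ∃ k, a ≤ k ∧ k ≤ b ∧ ρ.φ k ∈ Z) ∧
  (∀ k, k ≤ ρ.n → ¬ ρ.ColliderPos k → ρ.φ k ∉ Z)

end Route

/-- Separation `X ⫫_G Y | Z`: no `Z`-active route between a node of `X` and a
node of `Y`. -/
def Sep (G : HybridGraph V) (X Y Z : Set V) : Prop :=
  ¬ ∃ ρ : Route G, ρ.φ 0 ∈ X ∧ ρ.φ ρ.n ∈ Y ∧ ρ.ZActive Z

/-- `I(H) ⊆ I(G)`: every separation statement of `H` is one of `G`. -/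
def ModelLe (H G : HybridGraph V) : Prop :=
  ∀ X Y Z : Set V, Disjoint X Y → Disjoint X Z → Disjoint Y Z →
    H.Sep X Y Z → G.Sep X Y Z

/-- Result of splitting the component `C` into `C \ L` and `L`: every undirected
edge from `C \ L` to `L` becomes directed towards `L`. -/
def splitGraph (G : HybridGraph V) (C L : Set V) : HybridGraph V where
  dir x y := G.dir x y ∨ (x ∈ C \ L ∧ y ∈ L ∧ G.undir x y)
  undir x y := G.undir x y ∧ ¬((x ∈ C \ L ∧ y ∈ L) ∨ (y ∈ C \ L ∧ x ∈ L))
  dir_irrefl := by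
    intro x h
    rcases h with h | ⟨hx, hy, _⟩
    · exact G.dir_irrefl x h
    · exact hx.2 hy
  undir_irrefl := fun x h => G.undir_irrefl x h.1
  undir_symm := by
    intro x y h
    exact ⟨G.undir_symm x y h.1, fun hc => h.2 (Or.symm hc)⟩

/-- `H` is obtained from `G` by a feasible split of a component `C` into the two
nonempty connected parts `C \ L` and `L`. -/
def IsFeasibleSplit (G H : HybridGraph V) : Prop :=
  ∃ C L : Set V, G.IsComponent C ∧ L ⊆ C ∧ L.Nonempty ∧ (C \ L).Nonempty ∧
    (∀ x ∈ L, ∀ y ∈ L, G.uconn x y) ∧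
    (∀ x ∈ C \ L, ∀ y ∈ C \ L, G.uconn x y) ∧
    (∀ x ∈ G.nbr L ∩ (C \ L), ∀ y ∈ G.nbr L ∩ (C \ L), x ≠ y → G.undir x y) ∧
    (∀ x ∈ G.Pa L, ∀ y ∈ G.nbr L ∩ (C \ L), G.dir x y) ∧
    H = G.splitGraph C L

/-- Result of merging the components `L` and `R`: every directed edge from `L`
to `R` becomes undirected. -/
def mergeGraph (G : HybridGraph V) (L R : Set V) : HybridGraph V where
  dir x y := G.dir x y ∧ ¬(x ∈ L ∧ y ∈ R)
  undir x y := G.undir x y ∨ (x ∈ L ∧ y ∈ R ∧ G.dir x y) ∨ (y ∈ L ∧ x ∈ R ∧ G.dir y x)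
  dir_irrefl := fun x h => G.dir_irrefl x h.1
  undir_irrefl := by
    intro x h
    rcases h with h | ⟨_, _, h⟩ | ⟨_, _, h⟩
    · exact G.undir_irrefl x h
    · exact G.dir_irrefl x h
    · exact G.dir_irrefl x h
  undir_symm := by
    intro x y h
    rcases h with h | h | h
    · exact Or.inl (G.undir_symm x y h)
    · exact Or.inr (Or.inr h)
    · exact Or.inr (Or.inl h)

/-- `H` is obtained from `G` by a feasible merging of two components `L`, `R`. -/
def IsFeasibleMerge (G H : HybridGraph V) : Prop :=
  ∃ L R : Set V, G.IsComponent L ∧ G.IsComponent R ∧ L ≠ R ∧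
    (G.Pa R ∩ L).Nonempty ∧
    (∀ x ∈ G.Pa R ∩ L, ∀ y ∈ G.Pa R ∩ L, x ≠ y → G.undir x y) ∧
    (∀ x ∈ G.Pa R \ L, ∀ y ∈ G.Pa R ∩ L, G.dir x y) ∧
    H = G.mergeGraph L R

/-- `H` is obtained from `G` by adding a single (previously absent) directed or
undirected edge between two distinct nodes. -/
def IsEdgeAddition (G H : HybridGraph V) : Prop :=
  ∃ a b : V, a ≠ b ∧
    ((¬ G.dir a b ∧ (H.dir = fun x y => G.dir x y ∨ (x = a ∧ y = b)) ∧
        H.undir = G.undir) ∨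
     (¬ G.undir a b ∧ H.dir = G.dir ∧
        (H.undir = fun x y => G.undir x y ∨ (x = a ∧ y = b) ∨ (x = b ∧ y = a))))

/-- `H` is obtained from `G` by removing a single directed or undirected edge. -/
def IsEdgeRemoval (G H : HybridGraph V) : Prop :=
  ∃ a b : V,
    (G.dir a b ∧ (H.dir = fun x y => G.dir x y ∧ ¬(x = a ∧ y = b)) ∧
       H.undir = G.undir) ∨
    (G.undir a b ∧ H.dir = G.dir ∧
       (H.undir = fun x y => G.undir x y ∧ ¬((x = a ∧ y = b) ∨ (x = b ∧ y = a))))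

end HybridGraph

open HybridGraph

variable {V : Type}

/-- `X`, `Y`, `Z`, `W` are pairwise disjoint. -/
def PairwiseDisj (X Y Z W : Set V) : Prop :=
  Disjoint X Y ∧ Disjoint X Z ∧ Disjoint X W ∧
  Disjoint Y Z ∧ Disjoint Y W ∧ Disjoint Z W

/-- A graphoid: an independence model closed under symmetry, decomposition,
weak union, contraction and intersection (for pairwise disjoint arguments). -/
structure Graphoid (V : Type) where
  ind : Set V → Set V → Set V → Prop
  symm : ∀ X Y Z : Set V, Disjoint X Y → Disjoint X Z → Disjoint Y Z →
    ind X Y Z → ind Y X Z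
  decomp : ∀ X Y W Z : Set V, PairwiseDisj X Y Z W → ind X (Y ∪ W) Z → ind X Y Z
  weakUnion : ∀ X Y W Z : Set V, PairwiseDisj X Y Z W → ind X (Y ∪ W) Z →
    ind X Y (Z ∪ W)
  contraction : ∀ X Y W Z : Set V, PairwiseDisj X Y Z W → ind X Y (Z ∪ W) →
    ind X W Z → ind X (Y ∪ W) Z
  inter : ∀ X Y W Z : Set V, PairwiseDisj X Y Z W → ind X Y (Z ∪ W) →
    ind X W (Z ∪ Y) → ind X (Y ∪ W) Z

/-- `G` is an independence map of the model `M`: `I(G) ⊆ M`. -/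
def IsIMap (G : HybridGraph V) (M : Set V → Set V → Set V → Prop) : Prop :=
  ∀ X Y Z : Set V, Disjoint X Y → Disjoint X Z → Disjoint Y Z →
    G.Sep X Y Z → M X Y Z

/-- `Gα` is a minimal independence map of `M` relative to the chain `f`. -/
def IsMinIMapRel (M : Set V → Set V → Set V → Prop) (f : V → ℕ)
    (Gα : HybridGraph V) : Prop :=
  Gα.ConsistentWith f ∧ IsIMap Gα M ∧
    ∀ H : HybridGraph V, IsEdgeRemoval Gα H → ¬ IsIMap H M
namespace FM
open HybridGraph HybridGraph.EdgeKind

variable {V : Type}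

def CS (n : ℕ) (k : ℕ → EdgeKind) (a b : ℕ) : Prop :=
  a ≤ b ∧ b < n ∧ 0 < a ∧ (∀ i, a ≤ i → i < b → k i = und) ∧
  k (a-1) = fwd ∧ k b = bwd

def CP (n : ℕ) (k : ℕ → EdgeKind) (p : ℕ) : Prop :=
  ∃ a b, a ≤ p ∧ p ≤ b ∧ CS n k a b

def ZA (n : ℕ) (φ : ℕ → V) (k : ℕ → EdgeKind) (Z : Set V) : Prop :=
  (∀ a b, CS n k a b → ∃ j, a ≤ j ∧ j ≤ b ∧ φ j ∈ Z) ∧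
  (∀ j, j ≤ n → ¬ CP n k j → φ j ∉ Z)

def Valid (Γ : HybridGraph V) (n : ℕ) (φ : ℕ → V) (k : ℕ → EdgeKind) : Prop :=
  ∀ i, i < n →
    (k i = fwd → Γ.dir (φ i) (φ (i+1))) ∧
    (k i = bwd → Γ.dir (φ (i+1)) (φ i)) ∧
    (k i = und → Γ.undir (φ i) (φ (i+1)))

def EA (Γ : HybridGraph V) (X Y Z : Set V) : Prop :=
  ∃ n φ k, Valid Γ n φ k ∧ φ 0 ∈ X ∧ φ n ∈ Y ∧ ZA n φ k Z

lemma ea_iff_not_sep (Γ : HybridGraph V) (X Y Z : Set V) :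
    EA Γ X Y Z ↔ ¬ Γ.Sep X Y Z := by
  constructor
  · rintro ⟨n, φ, k, hv, h0, hn, hza⟩ hsep
    exact hsep ⟨⟨n, φ, k, hv⟩, h0, hn, hza⟩
  · intro h
    rcases not_not.mp h with ⟨ρ, h0, hn, hza⟩
    exact ⟨ρ.n, ρ.φ, ρ.kind, ρ.valid, h0, hn, hza⟩

lemma kind_cases (e : EdgeKind) : e = fwd ∨ e = bwd ∨ e = und := by
  cases e <;> simp

/-- Lemma A: if k agrees with k' wherever k' is not `und`, then every
CS of k' contains a CS of k. -/
lemma cs_refine {n : ℕ} {k k' : ℕ → EdgeKind}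
    (hag : ∀ i, i < n → k' i ≠ und → k i = k' i)
    {a b : ℕ} (h : CS n k' a b) :
    ∃ a₀ b₀, a ≤ a₀ ∧ b₀ ≤ b ∧ CS n k a₀ b₀ := by
  classical
  obtain ⟨hab, hbn, ha, hint, hf, hb⟩ := h
  have hka : k (a-1) = fwd := by
    rw [hag (a-1) (by omega) (by rw [hf]; simp)]; exact hf
  have hkb : k b = bwd := by
    rw [hag b (by omega) (by rw [hb]; simp)]; exact hb
  have hex : ∃ j, a ≤ j ∧ k j = bwd := ⟨b, hab, hkb⟩
  let b₀ := Nat.find hex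
  obtain ⟨hb₀a, hb₀k⟩ : a ≤ b₀ ∧ k b₀ = bwd := Nat.find_spec hex
  have hb₀b : b₀ ≤ b := Nat.find_le ⟨hab, hkb⟩
  have hb₀min : ∀ j, j < b₀ → ¬(a ≤ j ∧ k j = bwd) := fun j hj => Nat.find_min hex hj
  -- a₀ := greatest i ≤ b₀ - 1 with (a-1 ≤ i ∧ k i = fwd)
  set Q : ℕ → Prop := fun i => a - 1 ≤ i ∧ k i = fwd with hQ
  letI hQdec : DecidablePred Q := fun _ => Classical.propDecidable _
  have hQa : Q (a-1) := ⟨le_refl _, hka⟩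
  have hab₀ : a - 1 ≤ b₀ - 1 := by omega
  let a₀ := Nat.findGreatest Q (b₀ - 1)
  have ha₀Q : Q a₀ := Nat.findGreatest_spec hab₀ hQa
  have ha₀le : a₀ ≤ b₀ - 1 := Nat.findGreatest_le (b₀ - 1)
  have ha₀ge : a - 1 ≤ a₀ := ha₀Q.1
  have ha₀max : ∀ i, a₀ < i → i ≤ b₀ - 1 → ¬ Q i := by
    intro i h1 h2
    exact Nat.findGreatest_is_greatest h1 h2
  refine ⟨a₀ + 1, b₀, by omega, hb₀b, by omega, by omega, by omega, ?_, ?_, hb₀k⟩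
  · intro i hi1 hi2
    have hnf : ¬ (k i = fwd) := by
      intro hkf
      exact ha₀max i (by omega) (by omega) ⟨by omega, hkf⟩
    have hnb : ¬ (k i = bwd) := by
      intro hkb'
      exact hb₀min i (by omega) ⟨by omega, hkb'⟩
    rcases kind_cases (k i) with h|h|h
    · exact absurd h hnf
    · exact absurd h hnb
    · exact h
  · simpa using ha₀Q.2

/-- uniqueness: two CS sharing a common position coincide -/
lemma cs_unique {n : ℕ} {k : ℕ → EdgeKind} {a b a' b' p : ℕ}
    (h : CS n k a b) (h' : CS n k a' b') (hap : a ≤ p) (hpb : p ≤ b)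
    (hap' : a' ≤ p) (hpb' : p ≤ b') : a = a' ∧ b = b' := by
  obtain ⟨hab, hbn, ha, hint, hf, hb⟩ := h
  obtain ⟨hab', hbn', ha', hint', hf', hb'⟩ := h'
  constructor
  · by_contra hne
    rcases Nat.lt_or_ge a a' with hlt|hge
    · have := hint (a'-1) (by omega) (by omega)
      rw [hf'] at this; simp at this
    · have hlt : a' < a := by omega
      have := hint' (a-1) (by omega) (by omega)
      rw [hf] at this; simp at this
  · by_contra hne
    rcases Nat.lt_or_ge b b' with hlt|hge
    · have := hint' b (by omega) (by omega)
      rw [hb] at this; simp at this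
    · have hlt : b' < b := by omega
      have := hint b' (by omega) (by omega)
      rw [hb'] at this; simp at this

end FM
namespace FM
open HybridGraph HybridGraph.EdgeKind

structure Ctx (V : Type) where
  G : HybridGraph V
  H : HybridGraph V
  L : Set V
  R : Set V
  f : V → ℕ
  hf : G.ConsistentWith f
  hLcomp : G.IsComponent L
  hRcomp : G.IsComponent R
  hPne : (G.Pa R ∩ L).Nonempty
  hcompl : ∀ x ∈ G.Pa R ∩ L, ∀ y ∈ G.Pa R ∩ L, x ≠ y → G.undir x y
  hfeas : ∀ x ∈ G.Pa R \ L, ∀ y ∈ G.Pa R ∩ L, G.dir x y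
  hH : H = G.mergeGraph L R

namespace Ctx

variable {V : Type} (c : Ctx V)

lemma f_uconn {x y : V} (h : c.G.uconn x y) : c.f x = c.f y := by
  induction h with
  | refl => rfl
  | tail _ h ih => exact ih.trans (c.hf.2 _ _ h)

lemma mem_comp_undir {S : Set V} (hS : c.G.IsComponent S) {x y : V}
    (h : c.G.undir x y) : x ∈ S ↔ y ∈ S := by
  obtain ⟨z, rfl⟩ := hS
  constructor
  · intro hx; exact Relation.ReflTransGen.tail hx h
  · intro hy; exact Relation.ReflTransGen.tail hy (c.G.undir_symm _ _ h)

lemma mem_L_undir {x y : V} (h : c.G.undir x y) : x ∈ c.L ↔ y ∈ c.L :=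
  c.mem_comp_undir c.hLcomp h

lemma mem_R_undir {x y : V} (h : c.G.undir x y) : x ∈ c.R ↔ y ∈ c.R :=
  c.mem_comp_undir c.hRcomp h

lemma f_const_comp {S : Set V} (hS : c.G.IsComponent S) {x y : V}
    (hx : x ∈ S) (hy : y ∈ S) : c.f x = c.f y := by
  obtain ⟨z, rfl⟩ := hS
  exact (c.f_uconn hx).symm.trans (c.f_uconn hy)

lemma exists_P : ∃ u v, c.G.dir u v ∧ u ∈ c.L ∧ v ∈ c.R := by
  obtain ⟨u, ⟨⟨v, hv, hd⟩, huL⟩⟩ := c.hPne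
  exact ⟨u, v, hd, huL, hv⟩

lemma lt_LR {x y : V} (hx : x ∈ c.L) (hy : y ∈ c.R) : c.f x < c.f y := by
  obtain ⟨u, v, hd, hu, hv⟩ := c.exists_P
  have h1 : c.f x = c.f u := c.f_const_comp c.hLcomp hx hu
  have h2 : c.f v = c.f y := c.f_const_comp c.hRcomp hv hy
  have := c.hf.1 _ _ hd
  omega

lemma disj_LR {x : V} (hx : x ∈ c.L) (hx' : x ∈ c.R) : False :=
  lt_irrefl _ (c.lt_LR hx hx')

lemma not_dir_RR {x y : V} (hx : x ∈ c.R) (hy : y ∈ c.R) (h : c.G.dir x y) :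
    False := by
  have := c.hf.1 _ _ h
  have := c.f_const_comp c.hRcomp hx hy
  omega

lemma excl_du {x y : V} (h : c.G.dir x y) (h' : c.G.undir x y) : False := by
  have := c.hf.1 _ _ h; have := c.hf.2 _ _ h'; omega

lemma excl_du' {x y : V} (h : c.G.dir x y) (h' : c.G.undir y x) : False := by
  have := c.hf.1 _ _ h; have := c.hf.2 _ _ h'; omega

lemma excl_dd {x y : V} (h : c.G.dir x y) (h' : c.G.dir y x) : False := by
  have := c.hf.1 _ _ h; have := c.hf.1 _ _ h'; omega

lemma mem_PaRL {u v : V} (hd : c.G.dir u v) (hv : v ∈ c.R) (hu : u ∈ c.L) :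
    u ∈ c.G.Pa c.R ∩ c.L := ⟨⟨v, hv, hd⟩, hu⟩

/-- completeness of `Pa R ∩ L`, convenient form -/
lemma compl' {u v a b : V} (hu : u ∈ c.L) (hv : v ∈ c.L)
    (hda : c.G.dir u a) (ha : a ∈ c.R) (hdb : c.G.dir v b) (hb : b ∈ c.R)
    (hne : u ≠ v) : c.G.undir u v :=
  c.hcompl u (c.mem_PaRL hda ha hu) v (c.mem_PaRL hdb hb hv) hne

/-- feasibility (ii), convenient form -/
lemma feas2' {x u a b : V} (hx : x ∉ c.L) (hda : c.G.dir x a) (ha : a ∈ c.R)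
    (hu : u ∈ c.L) (hdb : c.G.dir u b) (hb : b ∈ c.R) : c.G.dir x u :=
  c.hfeas x ⟨⟨a, ha, hda⟩, hx⟩ u (c.mem_PaRL hdb hb hu)

lemma Hdir {x y : V} : c.H.dir x y ↔ c.G.dir x y ∧ ¬(x ∈ c.L ∧ y ∈ c.R) := by
  rw [c.hH]; exact Iff.rfl

lemma Hundir {x y : V} : c.H.undir x y ↔ c.G.undir x y ∨
    (x ∈ c.L ∧ y ∈ c.R ∧ c.G.dir x y) ∨ (y ∈ c.L ∧ x ∈ c.R ∧ c.G.dir y x) := by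
  rw [c.hH]; exact Iff.rfl

lemma GundH {x y : V} (h : c.G.undir x y) : c.H.undir x y :=
  c.Hundir.mpr (Or.inl h)

/-- membership in L (or R) propagates along an undirected (in kG) segment -/
lemma seg_mem {n : ℕ} {φ : ℕ → V} {k : ℕ → EdgeKind} (hv : Valid c.G n φ k)
    {S : Set V} (hS : c.G.IsComponent S) {i j : ℕ} (hij : i ≤ j) (hjn : j ≤ n)
    (hund : ∀ t, i ≤ t → t < j → k t = und) : φ i ∈ S ↔ φ j ∈ S := by
  induction j, hij using Nat.le_induction with
  | base => exact Iff.rfl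
  | succ m hm ih =>
    have h1 : φ i ∈ S ↔ φ m ∈ S :=
      ih (by omega) (fun t ht1 ht2 => hund t ht1 (by omega))
    have h2 : c.G.undir (φ m) (φ (m+1)) :=
      (hv m (by omega)).2.2 (hund m hm (by omega))
    exact h1.trans (c.mem_comp_undir hS h2)

/-- Part 1 : `H` is a chain graph. -/
lemma H_isChainGraph : c.H.IsChainGraph := by
  classical
  obtain ⟨u₀, v₀, hd₀, hu₀, hv₀⟩ := c.exists_P
  refine ⟨fun x => if x ∈ c.R then c.f u₀ else c.f x, ?_, ?_⟩
  · intro x y hxy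
    rw [c.Hdir] at hxy
    obtain ⟨hd, hnm⟩ := hxy
    by_cases hyR : y ∈ c.R
    · have hxL : x ∉ c.L := fun hxL => hnm ⟨hxL, hyR⟩
      have hxR : x ∉ c.R := fun hxR => c.not_dir_RR hxR hyR hd
      have : c.G.dir x u₀ := c.feas2' hxL hd hyR hu₀ hd₀ hv₀
      simp only [if_pos hyR, if_neg hxR]
      exact c.hf.1 _ _ this
    · by_cases hxR : x ∈ c.R
      · simp only [if_neg hyR, if_pos hxR]
        have h1 : c.f u₀ < c.f x := c.lt_LR hu₀ hxR
        have h2 : c.f x < c.f y := c.hf.1 _ _ hd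
        omega
      · simp only [if_neg hyR, if_neg hxR]
        exact c.hf.1 _ _ hd
  · intro x y hxy
    rw [c.Hundir] at hxy
    rcases hxy with h | ⟨hxL, hyR, hd⟩ | ⟨hyL, hxR, hd⟩
    · by_cases hxR : x ∈ c.R
      · have hyR : y ∈ c.R := (c.mem_R_undir h).mp hxR
        simp [if_pos hxR, if_pos hyR]
      · have hyR : y ∉ c.R := fun hyR => hxR ((c.mem_R_undir h).mpr hyR)
        simp only [if_neg hxR, if_neg hyR]
        exact c.hf.2 _ _ h
    · have hxR : x ∉ c.R := fun hxR => c.disj_LR hxL hxR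
      simp only [if_neg hxR, if_pos hyR]
      exact c.f_const_comp c.hLcomp hxL hu₀
    · have hyR : y ∉ c.R := fun hyR => c.disj_LR hyL hyR
      simp only [if_pos hxR, if_neg hyR]
      exact (c.f_const_comp c.hLcomp hyL hu₀).symm

end Ctx
end FM
namespace FM
open HybridGraph HybridGraph.EdgeKind

variable {V : Type}

/-- edge `i` is a merged edge: undirected in `H`'s kinds, directed in `G`'s -/
def Mrg (kG kH : ℕ → EdgeKind) (i : ℕ) : Prop := kH i = und ∧ kG i ≠ und

namespace Ctx

variable (c : Ctx V)

/-- a pair of compatible kind-sequences on the same node sequence. -/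
def Pair (n : ℕ) (φ : ℕ → V) (kG kH : ℕ → EdgeKind) : Prop :=
  Valid c.G n φ kG ∧ Valid c.H n φ kH ∧
  (∀ i, i < n → kH i ≠ und → kG i = kH i) ∧
  (∀ i, i < n → kG i = und → kH i = und) ∧
  (∀ i, i < n → Mrg kG kH i →
    (kG i = fwd ∧ φ i ∈ c.L ∧ φ (i+1) ∈ c.R) ∨
    (kG i = bwd ∧ φ (i+1) ∈ c.L ∧ φ i ∈ c.R))

lemma pair_of_G {n : ℕ} {φ : ℕ → V} {kG : ℕ → EdgeKind}
    (hv : Valid c.G n φ kG) : ∃ kH, c.Pair n φ kG kH := by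
  classical
  refine ⟨fun i => if (kG i = fwd ∧ φ i ∈ c.L ∧ φ (i+1) ∈ c.R) ∨
      (kG i = bwd ∧ φ (i+1) ∈ c.L ∧ φ i ∈ c.R) then und else kG i,
    hv, ?_, ?_, ?_, ?_⟩
  · intro i hi
    by_cases hM : (kG i = fwd ∧ φ i ∈ c.L ∧ φ (i+1) ∈ c.R) ∨
        (kG i = bwd ∧ φ (i+1) ∈ c.L ∧ φ i ∈ c.R)
    · simp only [if_pos hM]
      refine ⟨by simp, by simp, fun _ => ?_⟩
      rcases hM with ⟨hk, h1, h2⟩ | ⟨hk, h1, h2⟩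
      · exact c.Hundir.mpr (Or.inr (Or.inl ⟨h1, h2, (hv i hi).1 hk⟩))
      · exact c.Hundir.mpr (Or.inr (Or.inr ⟨h1, h2, (hv i hi).2.1 hk⟩))
    · simp only [if_neg hM]
      refine ⟨fun hk => ?_, fun hk => ?_, fun hk => ?_⟩
      · exact c.Hdir.mpr ⟨(hv i hi).1 hk, fun hLR => hM (Or.inl ⟨hk, hLR.1, hLR.2⟩)⟩
      · exact c.Hdir.mpr ⟨(hv i hi).2.1 hk, fun hLR => hM (Or.inr ⟨hk, hLR.1, hLR.2⟩)⟩
      · exact c.GundH ((hv i hi).2.2 hk)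
  · intro i hi h
    by_cases hM : (kG i = fwd ∧ φ i ∈ c.L ∧ φ (i+1) ∈ c.R) ∨
        (kG i = bwd ∧ φ (i+1) ∈ c.L ∧ φ i ∈ c.R)
    · exact absurd (if_pos hM) h
    · simp [if_neg hM]
  · intro i hi h
    by_cases hM : (kG i = fwd ∧ φ i ∈ c.L ∧ φ (i+1) ∈ c.R) ∨
        (kG i = bwd ∧ φ (i+1) ∈ c.L ∧ φ i ∈ c.R)
    · simp [if_pos hM]
    · simp [if_neg hM, h]
  · intro i hi hm
    by_cases hM : (kG i = fwd ∧ φ i ∈ c.L ∧ φ (i+1) ∈ c.R) ∨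
        (kG i = bwd ∧ φ (i+1) ∈ c.L ∧ φ i ∈ c.R)
    · rcases hM with ⟨hk, h1, h2⟩ | ⟨hk, h1, h2⟩
      · exact Or.inl ⟨hk, h1, h2⟩
      · exact Or.inr ⟨hk, h1, h2⟩
    · exfalso
      obtain ⟨h1, h2⟩ := hm
      simp only [if_neg hM] at h1
      exact h2 h1

lemma pair_of_H {n : ℕ} {φ : ℕ → V} {kH : ℕ → EdgeKind}
    (hv : Valid c.H n φ kH) : ∃ kG, c.Pair n φ kG kH := by
  classical
  refine ⟨fun i => if kH i = und then
      (if c.G.undir (φ i) (φ (i+1)) then und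
       else if φ i ∈ c.L then fwd else bwd) else kH i, ?_, hv, ?_, ?_, ?_⟩
  · intro i hi
    by_cases hu : kH i = und
    · have hund : c.H.undir (φ i) (φ (i+1)) := (hv i hi).2.2 hu
      rw [c.Hundir] at hund
      by_cases hg : c.G.undir (φ i) (φ (i+1))
      · simp only [if_pos hu, if_pos hg]
        exact ⟨by simp, by simp, fun _ => hg⟩
      · rcases hund with h | ⟨h1, h2, hd3⟩ | ⟨h1, h2, hd3⟩
        · exact absurd h hg
        · simp only [if_pos hu, if_neg hg, if_pos h1]
          exact ⟨fun _ => hd3, by simp, by simp⟩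
        · have hL : φ i ∉ c.L := fun hc => c.disj_LR hc h2
          simp only [if_pos hu, if_neg hg, if_neg hL]
          exact ⟨by simp, fun _ => hd3, by simp⟩
    · simp only [if_neg hu]
      refine ⟨fun hk => ?_, fun hk => ?_, fun hk => absurd hk hu⟩
      · exact (c.Hdir.mp ((hv i hi).1 hk)).1
      · exact (c.Hdir.mp ((hv i hi).2.1 hk)).1
  · intro i hi h
    simp [if_neg h]
  · intro i hi h
    by_contra hu
    simp only [if_neg hu] at h
    exact hu h
  · intro i hi hm
    obtain ⟨h1, h2⟩ := hm
    simp only [if_pos h1] at h2 ⊢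
    have hund : c.H.undir (φ i) (φ (i+1)) := (hv i hi).2.2 h1
    rw [c.Hundir] at hund
    by_cases hg : c.G.undir (φ i) (φ (i+1))
    · rw [if_pos hg] at h2; simp at h2
    · rw [if_neg hg] at h2 ⊢
      rcases hund with h | ⟨ha, hb, hd3⟩ | ⟨ha, hb, hd3⟩
      · exact absurd h hg
      · rw [if_pos ha]
        exact Or.inl ⟨rfl, ha, hb⟩
      · have hL : φ i ∉ c.L := fun hc => c.disj_LR hc hb
        rw [if_neg hL]
        exact Or.inr ⟨rfl, ha, hb⟩

end Ctx

def spl (φ : ℕ → V) (c e : ℕ) : ℕ → V := fun j => if j ≤ c then φ j else φ (j + e)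

def splk (k : ℕ → EdgeKind) (κ : EdgeKind) (c e : ℕ) : ℕ → EdgeKind :=
  fun j => if j < c then k j else if j = c then κ else k (j + e)

lemma spl_le {φ : ℕ → V} {c e j : ℕ} (h : j ≤ c) : spl φ c e j = φ j := if_pos h

lemma spl_gt {φ : ℕ → V} {c e j : ℕ} (h : c < j) : spl φ c e j = φ (j + e) :=
  if_neg (by omega)

lemma splk_lt {k : ℕ → EdgeKind} {κ : EdgeKind} {c e j : ℕ} (h : j < c) :
    splk k κ c e j = k j := if_pos h

lemma splk_eq {k : ℕ → EdgeKind} {κ : EdgeKind} {c e : ℕ} :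
    splk k κ c e c = κ := by simp [splk]

lemma splk_gt {k : ℕ → EdgeKind} {κ : EdgeKind} {c e j : ℕ} (h : c < j) :
    splk k κ c e j = k (j + e) := by
  unfold splk
  rw [if_neg (by omega), if_neg (by omega)]

lemma valid_spl {Γ : HybridGraph V} {n : ℕ} {φ : ℕ → V} {k : ℕ → EdgeKind}
    (hv : Valid Γ n φ k) {c e n₁ : ℕ} {κ : EdgeKind} (hne : n₁ + e = n)
    (hκ : c < n₁ →
      (κ = fwd → Γ.dir (φ c) (φ (c+1+e))) ∧
      (κ = bwd → Γ.dir (φ (c+1+e)) (φ c)) ∧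
      (κ = und → Γ.undir (φ c) (φ (c+1+e)))) :
    Valid Γ n₁ (spl φ c e) (splk k κ c e) := by
  intro i hi
  rcases Nat.lt_trichotomy i c with hic | hic | hic
  · rw [splk_lt hic, spl_le (by omega : i ≤ c), spl_le (by omega : i + 1 ≤ c)]
    exact hv i (by omega)
  · subst hic
    rw [splk_eq, spl_le (le_refl i), spl_gt (by omega : i < i + 1)]
    exact hκ hi
  · rw [splk_gt hic, spl_gt (by omega : c < i), spl_gt (by omega : c < i + 1)]
    have h : i + 1 + e = i + e + 1 := by omega
    rw [h]
    exact hv (i + e) (by omega)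

lemma cs_spl_left {n n₁ c e : ℕ} {k : ℕ → EdgeKind} {κ : EdgeKind}
    {p q : ℕ} (h : CS n k p q) (hq : q < c) (hcn : c ≤ n₁) :
    CS n₁ (splk k κ c e) p q := by
  obtain ⟨h1, h2, h3, h4, h5, h6⟩ := h
  refine ⟨h1, by omega, h3, ?_, ?_, ?_⟩
  · intro i hi1 hi2; rw [splk_lt (by omega)]; exact h4 i hi1 hi2
  · rw [splk_lt (by omega)]; exact h5
  · rw [splk_lt (by omega)]; exact h6

lemma cs_spl_right {n n₁ c e : ℕ} {k : ℕ → EdgeKind} {κ : EdgeKind}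
    {p q : ℕ} (h : CS n k (p + e) (q + e)) (hne : n₁ + e = n)
    (hcp : c < p) (hκ : p = c + 1 → κ = k (c + e)) :
    CS n₁ (splk k κ c e) p q := by
  obtain ⟨h1, h2, h3, h4, h5, h6⟩ := h
  have hpe : p + e - 1 = p - 1 + e := by omega
  rw [hpe] at h5
  refine ⟨by omega, by omega, by omega, ?_, ?_, ?_⟩
  · intro i hi1 hi2
    rw [splk_gt (by omega)]
    exact h4 (i + e) (by omega) (by omega)
  · rcases Nat.lt_or_ge c (p - 1) with hc | hc
    · rw [splk_gt hc]
      exact h5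
    · have hpc : p = c + 1 := by omega
      have hc' : p - 1 = c := by omega
      rw [hc', splk_eq, hκ hpc]
      rw [hc'] at h5
      exact h5
  · rw [splk_gt (by omega)]; exact h6

lemma cs_spl_left' {n n₁ c e : ℕ} {k : ℕ → EdgeKind} {κ : EdgeKind}
    {p q : ℕ} (h : CS n₁ (splk k κ c e) p q) (hq : q < c) (hne : n₁ + e = n) :
    CS n k p q := by
  obtain ⟨h1, h2, h3, h4, h5, h6⟩ := h
  refine ⟨h1, by omega, h3, ?_, ?_, ?_⟩
  · intro i hi1 hi2; have h7 := h4 i hi1 hi2; rwa [splk_lt (by omega)] at h7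
  · have h7 := h5; rwa [splk_lt (by omega)] at h7
  · have h7 := h6; rwa [splk_lt (by omega)] at h7

lemma cs_spl_right' {n n₁ c e : ℕ} {k : ℕ → EdgeKind} {κ : EdgeKind}
    {p q : ℕ} (h : CS n₁ (splk k κ c e) p q) (hne : n₁ + e = n)
    (hcp : c < p) (hκ : p = c + 1 → κ = k (c + e)) :
    CS n k (p + e) (q + e) := by
  obtain ⟨h1, h2, h3, h4, h5, h6⟩ := h
  have hpe : p + e - 1 = p - 1 + e := by omega
  refine ⟨by omega, by omega, by omega, ?_, ?_, ?_⟩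
  · intro i hi1 hi2
    have h7 := h4 (i - e) (by omega) (by omega)
    rw [splk_gt (by omega)] at h7
    have hie : i - e + e = i := by omega
    rwa [hie] at h7
  · rw [hpe]
    rcases Nat.lt_or_ge c (p - 1) with hc | hc
    · have h7 := h5; rwa [splk_gt hc] at h7
    · have hpc : p = c + 1 := by omega
      have hc' : p - 1 = c := by omega
      have h7 := h5
      rw [hc', splk_eq, hκ hpc] at h7
      rw [hc']
      exact h7
  · have h7 := h6; rwa [splk_gt (by omega)] at h7

end FM
namespace FM
open HybridGraph HybridGraph.EdgeKind

variable {V : Type}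

/-- transfer of collider positions through a splice, for part (ii) of ZA -/
lemma ncp_transfer {n n₁ e a b : ℕ} {kG : ℕ → EdgeKind} {κ : EdgeKind}
    (hab : a ≤ b) (ha0 : 0 < a) (hbn : b < n)
    (hfw : kG (a-1) = fwd) (hbw : kG b = bwd)
    (hne : n₁ + e = n) (hcn : a - 1 ≤ n₁)
    (hd : b + 1 ≤ a + e) (he2 : a + e ≤ b + 2)
    (hκcol : κ = kG (a - 1 + e) ∨ a + e = b + 1) :
    ∀ j, j ≤ n₁ → CP n kG (if j ≤ a - 1 then j else j + e) →
      CP n₁ (splk kG κ (a-1) e) j := by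
  intro j hj hcp
  by_cases hjc : j ≤ a - 1
  · rw [if_pos hjc] at hcp
    obtain ⟨α, β, hα, hβ, hcs'⟩ := hcp
    have hβc : β < a - 1 := by
      rcases Nat.lt_trichotomy β (a-1) with h | h | h
      · exact h
      · exfalso; have h6 := hcs'.2.2.2.2.2; rw [h, hfw] at h6; simp at h6
      · exfalso
        have h6 := hcs'.2.2.2.1 (a-1) (by omega) (by omega)
        rw [hfw] at h6; simp at h6
    exact ⟨α, β, hα, hβ, cs_spl_left hcs' hβc hcn⟩
  · rw [if_neg hjc] at hcp
    obtain ⟨α, β, hα, hβ, hcs'⟩ := hcp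
    have hαb : b + 2 ≤ α := by
      rcases Nat.lt_trichotomy α (b+1) with h | h | h
      · exfalso
        have h6 := hcs'.2.2.2.1 b (by omega) (by omega)
        rw [hbw] at h6; simp at h6
      · exfalso
        have h6 := hcs'.2.2.2.2.1
        rw [h] at h6
        have hb' : b + 1 - 1 = b := by omega
        rw [hb', hbw] at h6; simp at h6
      · omega
    have hrw : α = (α - e) + e := by omega
    have hrw2 : β = (β - e) + e := by omega
    rw [hrw, hrw2] at hcs'
    have hres := cs_spl_right (c := a - 1) (κ := κ) hcs' hne (by omega)
      (fun hp => by
        rcases hκcol with h | h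
        · exact h
        · exact absurd rfl (by omega : ¬ (1 = 1)))
    exact ⟨α - e, β - e, by omega, by omega, hres⟩

namespace Ctx

variable (c : Ctx V)

/-- Direction 1 surgery. -/
lemma surg1 {n : ℕ} {φ : ℕ → V} {kG kH : ℕ → EdgeKind} {Z : Set V}
    (hp : c.Pair n φ kG kH) (hza : ZA n φ kG Z)
    {a b : ℕ} (hcs : CS n kG a b)
    (hside :
      (Mrg kG kH (a-1) ∧ ∀ p, 0 < p → p ≤ a - 1 →
        (∀ i, p ≤ i → i < a - 1 → kG i = und) → kG (p-1) = fwd → Mrg kG kH (p-1)) ∨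
      (Mrg kG kH b ∧ ∀ q, b + 1 ≤ q → q < n →
        (∀ i, b + 1 ≤ i → i < q → kG i = und) → kG q = bwd → Mrg kG kH q)) :
    ∃ n₁ φ₁ k₁, Valid c.G n₁ φ₁ k₁ ∧ ZA n₁ φ₁ k₁ Z ∧ n₁ < n ∧
      φ₁ 0 = φ 0 ∧ φ₁ n₁ = φ n := by
  classical
  obtain ⟨hvG, hvH, h3, h4, h5⟩ := hp
  obtain ⟨hab, hbn, ha0, hint, hfw, hbw⟩ := hcs
  have ha1 : a - 1 + 1 = a := by omega
  have hdx : c.G.dir (φ (a-1)) (φ a) := by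
    have h := (hvG (a-1) (by omega)).1 hfw
    rwa [ha1] at h
  have hdy : c.G.dir (φ (b+1)) (φ b) := (hvG b hbn).2.1 hbw
  have hsegR : φ a ∈ c.R ↔ φ b ∈ c.R :=
    c.seg_mem hvG c.hRcomp hab (by omega) hint
  have haR : φ a ∈ c.R := by
    rcases hside with ⟨hm, _⟩ | ⟨hm, _⟩
    · rcases h5 (a-1) (by omega) hm with ⟨_, _, h⟩ | ⟨h, _, _⟩
      · rwa [ha1] at h
      · rw [hfw] at h; simp at h
    · rcases h5 b (by omega) hm with ⟨h, _, _⟩ | ⟨_, _, h⟩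
      · rw [hbw] at h; simp at h
      · exact hsegR.mpr h
  have hbR : φ b ∈ c.R := hsegR.mp haR
  have hxL_mrg : Mrg kG kH (a-1) → φ (a-1) ∈ c.L := by
    intro hm
    rcases h5 (a-1) (by omega) hm with ⟨_, h, _⟩ | ⟨h, _, _⟩
    · exact h
    · rw [hfw] at h; simp at h
  have hyL_mrg : Mrg kG kH b → φ (b+1) ∈ c.L := by
    intro hm
    rcases h5 b (by omega) hm with ⟨h, _, _⟩ | ⟨_, h, _⟩
    · rw [hbw] at h; simp at h
    · exact h
  -- the two "straddle killers"
  have killDag : φ (a-1) ∈ c.L →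
      (∀ p', 0 < p' → p' ≤ a - 1 → (∀ i, p' ≤ i → i < a - 1 → kG i = und) →
        kG (p'-1) = fwd → Mrg kG kH (p'-1)) →
      ∀ p, 0 < p → p ≤ a - 1 → (∀ i, p ≤ i → i < a - 1 → kG i = und) →
      kG (p-1) = fwd → False := by
    intro hxL hdag p h1 h2 h3 h4
    have hm := hdag p h1 h2 h3 h4
    rcases h5 (p-1) (by omega) hm with ⟨_, _, hR⟩ | ⟨hk, _, _⟩
    · have hp1 : p - 1 + 1 = p := by omega
      rw [hp1] at hR
      have hseg := c.seg_mem hvG c.hLcomp (i := p) (j := a-1) h2 (by omega) h3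
      exact c.disj_LR (hseg.mpr hxL) hR
    · rw [h4] at hk; simp at hk
  have killDagr : φ (b+1) ∈ c.L →
      (∀ q', b + 1 ≤ q' → q' < n → (∀ i, b + 1 ≤ i → i < q' → kG i = und) →
        kG q' = bwd → Mrg kG kH q') →
      ∀ q, b + 1 ≤ q → q < n → (∀ i, b + 1 ≤ i → i < q → kG i = und) →
      kG q = bwd → False := by
    intro hyL hdagr q h1 h2 h3 h4
    have hm := hdagr q h1 h2 h3 h4
    rcases h5 q (by omega) hm with ⟨hk, _, _⟩ | ⟨_, _, hR⟩
    · rw [h4] at hk; simp at hk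
    · have hseg := c.seg_mem hvG c.hLcomp (i := b+1) (j := q) h1 (by omega) h3
      exact c.disj_LR (hseg.mp hyL) hR
  by_cases hxL : φ (a-1) ∈ c.L
  case neg =>
    -- x ∉ L forces the RIGHT case; new edge fwd x → y, e = b+1-a
    have hside' := hside.resolve_left (fun ⟨hm, _⟩ => hxL (hxL_mrg hm))
    obtain ⟨hmB, hdagr⟩ := hside'
    have hyL : φ (b+1) ∈ c.L := hyL_mrg hmB
    have hdxy : c.G.dir (φ (a-1)) (φ (b+1)) := c.feas2' hxL hdx haR hyL hdy hbR
    refine ⟨n - (b + 1 - a), spl φ (a-1) (b+1-a), splk kG fwd (a-1) (b+1-a),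
      ?_, ⟨?_, ?_⟩, by omega, spl_le (by omega), ?_⟩
    · refine valid_spl hvG (by omega) ?_
      intro _
      refine ⟨fun _ => ?_, fun h => by simp at h, fun h => by simp at h⟩
      have h : a - 1 + 1 + (b + 1 - a) = b + 1 := by omega
      rw [h]; exact hdxy
    · intro p q hpq
      by_cases hqc : q < a - 1
      · obtain ⟨j, hj1, hj2, hj3⟩ := hza.1 p q (cs_spl_left' (n := n) hpq hqc (by omega))
        exact ⟨j, hj1, hj2, by rwa [spl_le (by omega)]⟩
      · by_cases hpc : a < p
        · have hcs2 := cs_spl_right' (n := n) hpq (by omega) (by omega)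
            (fun h => absurd h (by omega))
          obtain ⟨j, hj1, hj2, hj3⟩ := hza.1 _ _ hcs2
          refine ⟨j - (b+1-a), by omega, by omega, ?_⟩
          rw [spl_gt (by omega)]
          have h : j - (b+1-a) + (b+1-a) = j := by omega
          rwa [h]
        · exfalso
          obtain ⟨hpq1, hpq2, hpq3, hpq4, hpq5, hpq6⟩ := hpq
          have hpa : p = a := by
            rcases Nat.lt_trichotomy p a with h | h | h
            · exfalso
              by_cases hq : q = a - 1
              · rw [hq, splk_eq] at hpq6; simp at hpq6
              · have h7 := hpq4 (a-1) (by omega) (by omega)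
                rw [splk_eq] at h7; simp at h7
            · exact h
            · omega
          have hqe : kG (q + (b+1-a)) = bwd := by
            have h := hpq6; rwa [splk_gt (by omega)] at h
          have hqint : ∀ i, b + 1 ≤ i → i < q + (b+1-a) → kG i = und := by
            intro i hi1 hi2
            have h := hpq4 (i - (b+1-a)) (by omega) (by omega)
            rw [splk_gt (by omega)] at h
            have hie : i - (b+1-a) + (b+1-a) = i := by omega
            rwa [hie] at h
          exact killDagr hyL hdagr (q + (b+1-a)) (by omega) (by omega) hqint hqe
    · intro j hj hncp
      have hJ : ¬ CP n kG (if j ≤ a - 1 then j else j + (b+1-a)) := by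
        intro hcp
        exact hncp (ncp_transfer (n₁ := n - (b+1-a)) (e := b+1-a) (κ := fwd) hab ha0 hbn hfw hbw (by omega) (by omega)
          (by omega) (by omega) (Or.inr (by omega)) j hj hcp)
      have h := hza.2 _ (by split <;> omega) hJ
      by_cases hjc : j ≤ a - 1
      · rw [if_pos hjc] at h; rwa [spl_le (by omega)]
      · rw [if_neg hjc] at h; rwa [spl_gt (by omega)]
    · rw [spl_gt (by omega)]
      congr 1
      omega
  case pos =>
    by_cases hyL : φ (b+1) ∈ c.L
    case neg =>
      -- y ∉ L forces the LEFT case; new edge bwd y → x, e = b+1-a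
      have hside' := hside.resolve_right (fun ⟨hm, _⟩ => hyL (hyL_mrg hm))
      obtain ⟨hmA, hdag⟩ := hside'
      have hdyx : c.G.dir (φ (b+1)) (φ (a-1)) := c.feas2' hyL hdy hbR hxL hdx haR
      refine ⟨n - (b + 1 - a), spl φ (a-1) (b+1-a), splk kG bwd (a-1) (b+1-a),
        ?_, ⟨?_, ?_⟩, by omega, spl_le (by omega), ?_⟩
      · refine valid_spl hvG (by omega) ?_
        intro _
        refine ⟨fun h => by simp at h, fun _ => ?_, fun h => by simp at h⟩
        have h : a - 1 + 1 + (b + 1 - a) = b + 1 := by omega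
        rw [h]; exact hdyx
      · intro p q hpq
        by_cases hqc : q < a - 1
        · obtain ⟨j, hj1, hj2, hj3⟩ := hza.1 p q (cs_spl_left' (n := n) hpq hqc (by omega))
          exact ⟨j, hj1, hj2, by rwa [spl_le (by omega)]⟩
        · by_cases hpc : a < p
          · have hcs2 := cs_spl_right' (n := n) hpq (by omega) (by omega)
              (fun h => absurd h (by omega))
            obtain ⟨j, hj1, hj2, hj3⟩ := hza.1 _ _ hcs2
            refine ⟨j - (b+1-a), by omega, by omega, ?_⟩
            rw [spl_gt (by omega)]
            have h : j - (b+1-a) + (b+1-a) = j := by omega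
            rwa [h]
          · exfalso
            obtain ⟨hpq1, hpq2, hpq3, hpq4, hpq5, hpq6⟩ := hpq
            -- p ≤ a; rule out p = a : flank fwd would be the new bwd edge
            have hpa : p ≤ a - 1 := by
              rcases Nat.lt_trichotomy p a with h | h | h
              · omega
              · exfalso
                rw [(by omega : p - 1 = a - 1), splk_eq] at hpq5
                simp at hpq5
              · omega
            -- rule out q > a - 1 : edge a-1 interior but it is bwd
            have hqa : q = a - 1 := by
              rcases Nat.lt_trichotomy q (a-1) with h | h | h
              · omega
              · exact h
              · exfalso
                have h7 := hpq4 (a-1) (by omega) (by omega)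
                rw [splk_eq] at h7; simp at h7
            refine killDag hxL hdag p hpq3 hpa ?_ ?_
            · intro i hi1 hi2
              have h7 := hpq4 i hi1 (by omega)
              rwa [splk_lt (by omega)] at h7
            · have h := hpq5; rwa [splk_lt (by omega)] at h
      · intro j hj hncp
        have hJ : ¬ CP n kG (if j ≤ a - 1 then j else j + (b+1-a)) := by
          intro hcp
          exact hncp (ncp_transfer (n₁ := n - (b+1-a)) (e := b+1-a) (κ := bwd) hab ha0 hbn hfw hbw (by omega) (by omega)
            (by omega) (by omega) (Or.inr (by omega)) j hj hcp)
        have h := hza.2 _ (by split <;> omega) hJ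
        by_cases hjc : j ≤ a - 1
        · rw [if_pos hjc] at h; rwa [spl_le (by omega)]
        · rw [if_neg hjc] at h; rwa [spl_gt (by omega)]
      · rw [spl_gt (by omega)]
        congr 1
        omega
    case pos =>
      by_cases hxy : φ (a-1) = φ (b+1)
      case neg =>
        -- new edge und x − y, e = b+1-a
        have hund : c.G.undir (φ (a-1)) (φ (b+1)) :=
          c.compl' hxL hyL hdx haR hdy hbR hxy
        refine ⟨n - (b + 1 - a), spl φ (a-1) (b+1-a), splk kG und (a-1) (b+1-a),
          ?_, ⟨?_, ?_⟩, by omega, spl_le (by omega), ?_⟩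
        · refine valid_spl hvG (by omega) ?_
          intro _
          refine ⟨fun h => by simp at h, fun h => by simp at h, fun _ => ?_⟩
          have h : a - 1 + 1 + (b + 1 - a) = b + 1 := by omega
          rw [h]; exact hund
        · intro p q hpq
          by_cases hqc : q < a - 1
          · obtain ⟨j, hj1, hj2, hj3⟩ := hza.1 p q (cs_spl_left' (n := n) hpq hqc (by omega))
            exact ⟨j, hj1, hj2, by rwa [spl_le (by omega)]⟩
          · by_cases hpc : a < p
            · have hcs2 := cs_spl_right' (n := n) hpq (by omega) (by omega)
                (fun h => absurd h (by omega))
              obtain ⟨j, hj1, hj2, hj3⟩ := hza.1 _ _ hcs2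
              refine ⟨j - (b+1-a), by omega, by omega, ?_⟩
              rw [spl_gt (by omega)]
              have h : j - (b+1-a) + (b+1-a) = j := by omega
              rwa [h]
            · exfalso
              obtain ⟨hpq1, hpq2, hpq3, hpq4, hpq5, hpq6⟩ := hpq
              have hpa : p ≤ a - 1 := by
                rcases Nat.lt_trichotomy p a with h | h | h
                · omega
                · exfalso
                  rw [(by omega : p - 1 = a - 1), splk_eq] at hpq5
                  simp at hpq5
                · omega
              have hqa : a - 1 < q := by
                rcases Nat.lt_trichotomy q (a-1) with h | h | h
                · omega
                · exfalso; rw [h, splk_eq] at hpq6; simp at hpq6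
                · exact h
              rcases hside with ⟨hmA, hdag⟩ | ⟨hmB, hdagr⟩
              · refine killDag hxL hdag p hpq3 hpa ?_ ?_
                · intro i hi1 hi2
                  have h7 := hpq4 i hi1 (by omega)
                  rwa [splk_lt (by omega)] at h7
                · have h := hpq5; rwa [splk_lt (by omega)] at h
              · have hqe : kG (q + (b+1-a)) = bwd := by
                  have h := hpq6; rwa [splk_gt (by omega)] at h
                have hqint : ∀ i, b + 1 ≤ i → i < q + (b+1-a) → kG i = und := by
                  intro i hi1 hi2
                  have h := hpq4 (i - (b+1-a)) (by omega) (by omega)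
                  rw [splk_gt (by omega)] at h
                  have hie : i - (b+1-a) + (b+1-a) = i := by omega
                  rwa [hie] at h
                exact killDagr hyL hdagr (q + (b+1-a)) (by omega) (by omega)
                  hqint hqe
        · intro j hj hncp
          have hJ : ¬ CP n kG (if j ≤ a - 1 then j else j + (b+1-a)) := by
            intro hcp
            exact hncp (ncp_transfer (n₁ := n - (b+1-a)) (e := b+1-a) (κ := und) hab ha0 hbn hfw hbw (by omega) (by omega)
              (by omega) (by omega) (Or.inr (by omega)) j hj hcp)
          have h := hza.2 _ (by split <;> omega) hJ
          by_cases hjc : j ≤ a - 1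
          · rw [if_pos hjc] at h; rwa [spl_le (by omega)]
          · rw [if_neg hjc] at h; rwa [spl_gt (by omega)]
        · rw [spl_gt (by omega)]
          congr 1
          omega
      case pos =>
        -- collapse, e = b+2-a, κ = kG (a-1+(b+2-a))
        refine ⟨n - (b + 2 - a), spl φ (a-1) (b+2-a),
          splk kG (kG (a - 1 + (b+2-a))) (a-1) (b+2-a),
          ?_, ⟨?_, ?_⟩, by omega, spl_le (by omega), ?_⟩
        · refine valid_spl hvG (by omega) ?_
          intro hlt
          have hb2 : b + 2 ≤ n := by omega
          have hidx : a - 1 + (b + 2 - a) = b + 1 := by omega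
          have hidx2 : a - 1 + 1 + (b + 2 - a) = b + 2 := by omega
          rw [hidx, hidx2]
          obtain ⟨w1, w2, w3⟩ := hvG (b+1) (by omega)
          refine ⟨fun h => ?_, fun h => ?_, fun h => ?_⟩
          · rw [hxy]; exact w1 h
          · rw [hxy]; exact w2 h
          · rw [hxy]; exact w3 h
        · intro p q hpq
          by_cases hqc : q < a - 1
          · obtain ⟨j, hj1, hj2, hj3⟩ := hza.1 p q (cs_spl_left' (n := n) hpq hqc (by omega))
            exact ⟨j, hj1, hj2, by rwa [spl_le (by omega)]⟩
          · by_cases hpc : a - 1 < p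
            · have hcs2 := cs_spl_right' (n := n) hpq (by omega) hpc (fun _ => rfl)
              obtain ⟨j, hj1, hj2, hj3⟩ := hza.1 _ _ hcs2
              refine ⟨j - (b+2-a), by omega, by omega, ?_⟩
              rw [spl_gt (by omega)]
              have h : j - (b+2-a) + (b+2-a) = j := by omega
              rwa [h]
            · exfalso
              obtain ⟨hpq1, hpq2, hpq3, hpq4, hpq5, hpq6⟩ := hpq
              have hpa : p ≤ a - 1 := by omega
              have hqgt : ∀ i, a - 1 ≤ i → i ≤ q →
                  splk kG (kG (a - 1 + (b+2-a))) (a-1) (b+2-a) i = kG (i + (b+2-a)) := by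
                intro i hi1 hi2
                rcases Nat.lt_or_ge (a-1) i with h | h
                · exact splk_gt h
                · have : i = a - 1 := by omega
                  rw [this, splk_eq]
              rcases hside with ⟨hmA, hdag⟩ | ⟨hmB, hdagr⟩
              · refine killDag hxL hdag p hpq3 hpa ?_ ?_
                · intro i hi1 hi2
                  have h7 := hpq4 i hi1 (by omega)
                  rwa [splk_lt (by omega)] at h7
                · have h := hpq5; rwa [splk_lt (by omega)] at h
              · have hqe : kG (q + (b+2-a)) = bwd := by
                  have h := hpq6; rwa [hqgt q (by omega) (le_refl q)] at h
                have hqint : ∀ i, b + 1 ≤ i → i < q + (b+2-a) → kG i = und := by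
                  intro i hi1 hi2
                  have h := hpq4 (i - (b+2-a)) (by omega) (by omega)
                  rw [hqgt (i - (b+2-a)) (by omega) (by omega)] at h
                  have hie : i - (b+2-a) + (b+2-a) = i := by omega
                  rwa [hie] at h
                exact killDagr hyL hdagr (q + (b+2-a)) (by omega) (by omega)
                  hqint hqe
        · intro j hj hncp
          have hJ : ¬ CP n kG (if j ≤ a - 1 then j else j + (b+2-a)) := by
            intro hcp
            exact hncp (ncp_transfer (n₁ := n - (b+2-a)) (e := b+2-a) hab ha0 hbn hfw hbw (by omega) (by omega)
              (by omega) (by omega) (Or.inl rfl) j hj hcp)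
          have h := hza.2 _ (by split <;> omega) hJ
          by_cases hjc : j ≤ a - 1
          · rw [if_pos hjc] at h; rwa [spl_le (by omega)]
          · rw [if_neg hjc] at h; rwa [spl_gt (by omega)]
        · rcases Nat.lt_or_ge (a-1) (n - (b+2-a)) with h | h
          · rw [spl_gt h]
            congr 1
            omega
          · have hn1 : n - (b + 2 - a) = a - 1 := by omega
            rw [spl_le h, hn1, hxy]
            congr 1
            omega

end Ctx
end FM
namespace FM
open HybridGraph HybridGraph.EdgeKind

variable {V : Type}

namespace Ctx

variable (c : Ctx V)

lemma dir1_aux (X Y Z : Set V) : ∀ n, ∀ φ : ℕ → V, ∀ kG : ℕ → EdgeKind,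
    Valid c.G n φ kG → φ 0 ∈ X → φ n ∈ Y → ZA n φ kG Z → EA c.H X Y Z := by
  intro n
  induction n using Nat.strong_induction_on with
  | _ n IH =>
    intro φ kG hv h0 hn hza
    obtain ⟨kH, hp⟩ := c.pair_of_G hv
    by_cases hgood : ∀ p, CP n kG p → CP n kH p
    · refine ⟨n, φ, kH, hp.2.1, h0, hn, ?_, ?_⟩
      · intro α β hcs
        obtain ⟨a₀, b₀, h1, h2, hcs'⟩ :=
          cs_refine (fun i hi hne => hp.2.2.1 i hi hne) hcs
        obtain ⟨j, hj1, hj2, hj3⟩ := hza.1 _ _ hcs'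
        exact ⟨j, by omega, by omega, hj3⟩
      · intro j hj hncp
        exact hza.2 j hj (fun hcp => hncp (hgood j hcp))
    · push_neg at hgood
      obtain ⟨p, hcp, hncp⟩ := hgood
      obtain ⟨a, b, hap, hpb, hcs⟩ := hcp
      obtain ⟨hab, hbn, ha0, hint, hfw, hbw⟩ := hcs
      have hcs : CS n kG a b := ⟨hab, hbn, ha0, hint, hfw, hbw⟩
      have hLHRH :
          (∃ q, 0 < q ∧ q ≤ p ∧ (∀ i, q ≤ i → i < p → kH i = und) ∧ kH (q-1) = fwd) →
          (∃ r, p ≤ r ∧ r < n ∧ (∀ i, p ≤ i → i < r → kH i = und) ∧ kH r = bwd) →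
          False := by
        rintro ⟨q, hq0, hqp, hqint, hqf⟩ ⟨r, hpr, hrn, hrint, hrb⟩
        refine hncp ⟨q, r, hqp, hpr, by omega, hrn, hq0, ?_, hqf, hrb⟩
        intro i hi1 hi2
        rcases Nat.lt_or_ge i p with h | h
        · exact hqint i hi1 h
        · exact hrint i h hi2
      have hside :
          (Mrg kG kH (a-1) ∧ ∀ p', 0 < p' → p' ≤ a - 1 →
            (∀ i, p' ≤ i → i < a - 1 → kG i = und) → kG (p'-1) = fwd →
              Mrg kG kH (p'-1)) ∨
          (Mrg kG kH b ∧ ∀ q', b + 1 ≤ q' → q' < n →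
            (∀ i, b + 1 ≤ i → i < q' → kG i = und) → kG q' = bwd →
              Mrg kG kH q') := by
        by_cases hLH : ∃ q, 0 < q ∧ q ≤ p ∧
            (∀ i, q ≤ i → i < p → kH i = und) ∧ kH (q-1) = fwd
        · -- RH fails: prove right side
          right
          have hmB : Mrg kG kH b := by
            refine ⟨?_, by rw [hbw]; simp⟩
            by_contra hu
            refine hLHRH hLH ⟨b, by omega, hbn, ?_, ?_⟩
            · intro i hi1 hi2
              exact hp.2.2.2.1 i (by omega) (hint i (by omega) hi2)
            · rw [← hp.2.2.1 b hbn hu]; exact hbw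
          refine ⟨hmB, ?_⟩
          intro q' h1 h2 h3 h4
          by_contra hu
          have hku : kH q' ≠ und := by
            intro h'; exact hu ⟨h', by rw [h4]; simp⟩
          refine hLHRH hLH ⟨q', by omega, h2, ?_, by rw [← hp.2.2.1 q' h2 hku]; exact h4⟩
          intro i hi1 hi2
          rcases Nat.lt_or_ge i b with h | h
          · exact hp.2.2.2.1 i (by omega) (hint i (by omega) h)
          · rcases Nat.lt_or_ge i (b+1) with h' | h'
            · have : i = b := by omega
              rw [this]; exact hmB.1
            · exact hp.2.2.2.1 i (by omega) (h3 i h' hi2)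
        · left
          have hmA : Mrg kG kH (a-1) := by
            refine ⟨?_, by rw [hfw]; simp⟩
            by_contra hu
            refine hLH ⟨a, ha0, hap, ?_, ?_⟩
            · intro i hi1 hi2
              exact hp.2.2.2.1 i (by omega) (hint i hi1 (by omega))
            · rw [← hp.2.2.1 (a-1) (by omega) hu]; exact hfw
          refine ⟨hmA, ?_⟩
          intro p' h1 h2 h3 h4
          by_contra hu
          have hku : kH (p'-1) ≠ und := by
            intro h'; exact hu ⟨h', by rw [h4]; simp⟩
          refine hLH ⟨p', h1, by omega, ?_, by rw [← hp.2.2.1 (p'-1) (by omega) hku]; exact h4⟩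
          intro i hi1 hi2
          rcases Nat.lt_or_ge i (a-1) with h | h
          · exact hp.2.2.2.1 i (by omega) (h3 i hi1 h)
          · rcases Nat.lt_or_ge i a with h' | h'
            · have : i = a - 1 := by omega
              rw [this]; exact hmA.1
            · exact hp.2.2.2.1 i (by omega) (hint i h' (by omega))
      obtain ⟨n₁, φ₁, k₁, hv₁, hza₁, hlt, he0, heN⟩ := c.surg1 hp hza hcs hside
      exact IH n₁ hlt φ₁ k₁ hv₁ (by rw [he0]; exact h0) (by rw [heN]; exact hn) hza₁

lemma dir1 (X Y Z : Set V) (h : EA c.G X Y Z) : EA c.H X Y Z := by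
  obtain ⟨n, φ, kG, hv, h0, hn, hza⟩ := h
  exact c.dir1_aux X Y Z n φ kG hv h0 hn hza

end Ctx
end FM
namespace FM
open HybridGraph HybridGraph.EdgeKind

variable {V : Type}

namespace Ctx

variable (c : Ctx V)

/-- Direction 2 surgery: splice out a directed "dip" into `R`. -/
lemma surg2 {n : ℕ} {φ : ℕ → V} {kG kH : ℕ → EdgeKind} {Z : Set V}
    (hp : c.Pair n φ kG kH) (hza : ZA n φ kH Z)
    {cc d : ℕ} (hcd : cc + 2 ≤ d) (hdn : d ≤ n)
    (hfwc : kG cc = fwd) (hbwd : kG (d-1) = bwd)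
    (hdip : ∀ i, cc < i → i < d - 1 → kG i = und)
    (hR : φ (cc+1) ∈ c.R)
    (hW : ∀ α β, CS n kH α β → α ≤ d - 1 → cc + 1 ≤ β →
        ∃ j, α ≤ j ∧ j ≤ β ∧ (j ≤ cc ∨ d ≤ j) ∧ φ j ∈ Z) :
    ∃ n₁ φ₁ k₁, Valid c.H n₁ φ₁ k₁ ∧ ZA n₁ φ₁ k₁ Z ∧ n₁ < n ∧
      φ₁ 0 = φ 0 ∧ φ₁ n₁ = φ n := by
  classical
  obtain ⟨hvG, hvH, h3, h4, h5⟩ := hp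
  have hd1 : d - 1 + 1 = d := by omega
  have hdR : φ (d-1) ∈ c.R := by
    have h := c.seg_mem hvG c.hRcomp (i := cc+1) (j := d-1) (by omega) (by omega)
      (fun t ht1 ht2 => hdip t (by omega) ht2)
    exact h.mp hR
  have hdx : c.G.dir (φ cc) (φ (cc+1)) := (hvG cc (by omega)).1 hfwc
  have hdy : c.G.dir (φ d) (φ (d-1)) := by
    have h := (hvG (d-1) (by omega)).2.1 hbwd
    rwa [hd1] at h
  -- dip interior is und in kH too
  have hdipH : ∀ i, cc < i → i < d - 1 → kH i = und :=
    fun i h1 h2 => h4 i (by omega) (hdip i h1 h2)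
  have hxLund : kH cc = und → φ cc ∈ c.L := by
    intro hu
    rcases h5 cc (by omega) ⟨hu, by rw [hfwc]; simp⟩ with ⟨_, h, _⟩ | ⟨h, _, _⟩
    · exact h
    · rw [hfwc] at h; simp at h
  have hxNund : φ cc ∉ c.L → kH cc = fwd := by
    intro hx
    rcases kind_cases (kH cc) with h | h | h
    · exact h
    · exfalso; rw [← h3 cc (by omega) (by rw [h]; simp), hfwc] at h; simp at h
    · exact absurd (hxLund h) hx
  have hxUndL : φ cc ∈ c.L → kH cc = und := by
    intro hx
    by_contra hu
    have h := h3 cc (by omega) hu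
    rw [hfwc] at h
    have hH := (hvH cc (by omega)).1 h.symm
    exact (c.Hdir.mp hH).2 ⟨hx, hR⟩
  have hyLund : kH (d-1) = und → φ d ∈ c.L := by
    intro hu
    rcases h5 (d-1) (by omega) ⟨hu, by rw [hbwd]; simp⟩ with ⟨h, _, _⟩ | ⟨_, h, _⟩
    · rw [hbwd] at h; simp at h
    · rwa [hd1] at h
  have hyNund : φ d ∉ c.L → kH (d-1) = bwd := by
    intro hy
    rcases kind_cases (kH (d-1)) with h | h | h
    · exfalso; rw [← h3 (d-1) (by omega) (by rw [h]; simp), hbwd] at h; simp at h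
    · exact h
    · exact absurd (hyLund h) hy
  have hyUndL : φ d ∈ c.L → kH (d-1) = und := by
    intro hy
    by_contra hu
    have h := h3 (d-1) (by omega) hu
    rw [hbwd] at h
    have hH := (hvH (d-1) (by omega)).2.1 h.symm
    rw [hd1] at hH
    exact (c.Hdir.mp hH).2 ⟨hy, hdR⟩
  by_cases hxL : φ cc ∈ c.L
  case neg =>
    by_cases hyL : φ d ∈ c.L
    case neg =>
      -- both flanks unmerged: the dip is a kH-collider section, contradiction with hW
      exfalso
      have hcs : CS n kH (cc+1) (d-1) :=
        ⟨by omega, by omega, by omega, fun i h1 h2 => hdipH i (by omega) h2,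
         by rw [(by omega : cc + 1 - 1 = cc)]; exact hxNund hxL, hyNund hyL⟩
      obtain ⟨j, hj1, hj2, hj3, _⟩ := hW _ _ hcs (by omega) (by omega)
      omega
    case pos =>
      -- new edge fwd  x → y   (x ∉ L, y ∈ L), e = d - cc - 1
      have hdxy : c.H.dir (φ cc) (φ d) :=
        c.Hdir.mpr ⟨c.feas2' hxL hdx hR hyL hdy hdR, fun h => hxL h.1⟩
      have hHc : kH cc = fwd := hxNund hxL
      have hHd : kH (d-1) = und := hyUndL hyL
      refine ⟨n - (d - cc - 1), spl φ cc (d - cc - 1), splk kH fwd cc (d - cc - 1),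
        ?_, ⟨?_, ?_⟩, by omega, spl_le (by omega), ?_⟩
      · refine valid_spl hvH (by omega) ?_
        intro _
        refine ⟨fun _ => ?_, fun h => by simp at h, fun h => by simp at h⟩
        rw [(by omega : cc + 1 + (d - cc - 1) = d)]
        exact hdxy
      · intro p q hpq
        by_cases hqc : q < cc
        · obtain ⟨j, hj1, hj2, hj3⟩ := hza.1 p q (cs_spl_left' (n := n) hpq hqc (by omega))
          exact ⟨j, hj1, hj2, by rwa [spl_le (by omega)]⟩
        · by_cases hpc : cc + 1 < p
          · have hcs2 := cs_spl_right' (n := n) hpq (by omega) (by omega)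
              (fun h => absurd h (by omega))
            obtain ⟨j, hj1, hj2, hj3⟩ := hza.1 _ _ hcs2
            refine ⟨j - (d - cc - 1), by omega, by omega, ?_⟩
            rw [spl_gt (by omega)]
            rwa [(by omega : j - (d - cc - 1) + (d - cc - 1) = j)]
          · obtain ⟨hpq1, hpq2, hpq3, hpq4, hpq5, hpq6⟩ := hpq
            have hpcc : p = cc + 1 := by
              rcases Nat.lt_trichotomy p (cc+1) with h | h | h
              · exfalso
                have hq : cc < q := by
                  rcases Nat.lt_trichotomy q cc with h' | h' | h'
                  · omega
                  · exfalso; rw [h', splk_eq] at hpq6; simp at hpq6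
                  · exact h'
                have h7 := hpq4 cc (by omega) (by omega)
                rw [splk_eq] at h7; simp at h7
              · exact h
              · omega
            -- CS n kH (cc+1, q+e)
            have hqe : kH (q + (d - cc - 1)) = bwd := by
              have h := hpq6; rwa [splk_gt (by omega)] at h
            have hcs3 : CS n kH (cc+1) (q + (d - cc - 1)) := by
              refine ⟨by omega, by omega, by omega, ?_, ?_, hqe⟩
              · intro i hi1 hi2
                rcases Nat.lt_or_ge i (d-1) with h | h
                · exact hdipH i (by omega) h
                · rcases Nat.lt_or_ge i d with h' | h'
                  · rw [(by omega : i = d - 1)]; exact hHd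
                  · have h7 := hpq4 (i - (d - cc - 1)) (by omega) (by omega)
                    rw [splk_gt (by omega)] at h7
                    rwa [(by omega : i - (d - cc - 1) + (d - cc - 1) = i)] at h7
              · rw [(by omega : cc + 1 - 1 = cc)]; exact hHc
            obtain ⟨j, hj1, hj2, hj3, hj4⟩ := hW _ _ hcs3 (by omega) (by omega)
            have hjd : d ≤ j := by omega
            refine ⟨j - (d - cc - 1), by omega, by omega, ?_⟩
            rw [spl_gt (by omega)]
            rwa [(by omega : j - (d - cc - 1) + (d - cc - 1) = j)]
      · -- non-collider positions
        intro j hj hncp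
        have hJ : ¬ CP n kH (if j ≤ cc then j else j + (d - cc - 1)) := by
          intro hcp
          apply hncp
          obtain ⟨α, β, hα, hβ, hcs'⟩ := hcp
          obtain ⟨k1, k2, k3, k4, k5, k6⟩ := hcs'
          have hcs' : CS n kH α β := ⟨k1, k2, k3, k4, k5, k6⟩
          by_cases hjc : j ≤ cc
          · rw [if_pos hjc] at hα hβ
            have hβc : β < cc := by
              rcases Nat.lt_trichotomy β cc with h | h | h
              · exact h
              · exfalso; rw [h, hHc] at k6; simp at k6
              · exfalso
                have h7 := k4 cc (by omega) (by omega)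
                rw [hHc] at h7; simp at h7
            exact ⟨α, β, hα, hβ, cs_spl_left hcs' hβc (by omega)⟩
          · rw [if_neg hjc] at hα hβ
            have hJd : d ≤ j + (d - cc - 1) := by omega
            have hαd : α = cc + 1 ∨ d + 1 ≤ α := by
              rcases Nat.lt_trichotomy α (cc+1) with h | h | h
              · exfalso
                have h7 := k4 cc (by omega) (by omega)
                rw [hHc] at h7; simp at h7
              · exact Or.inl h
              · rcases Nat.lt_or_ge α (d+1) with h' | h'
                · exfalso
                  have h8 : α - 1 ∈ Set.Icc (cc+1) (d-1) := by
                    simp only [Set.mem_Icc]; omega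
                  rcases Nat.lt_or_ge (α-1) (d-1) with h9 | h9
                  · have := hdipH (α-1) (by omega) h9
                    rw [k5] at this; simp at this
                  · have hα1 : α - 1 = d - 1 := by omega
                    rw [hα1, hHd] at k5; simp at k5
                · exact Or.inr h'
            rcases hαd with h | h
            · -- spanning : CS n₁ (cc+1, β - e)
              refine ⟨cc + 1, β - (d - cc - 1), by omega, by omega, ?_⟩
              refine ⟨by omega, by omega, by omega, ?_, ?_, ?_⟩
              · intro i hi1 hi2
                rw [splk_gt (by omega)]
                exact k4 (i + (d - cc - 1)) (by omega) (by omega)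
              · rw [(by omega : cc + 1 - 1 = cc), splk_eq]
              · rw [splk_gt (by omega)]
                rwa [(by omega : β - (d - cc - 1) + (d - cc - 1) = β)]
            · -- shifted
              refine ⟨α - (d - cc - 1), β - (d - cc - 1), by omega, by omega, ?_⟩
              have hre : α = (α - (d - cc - 1)) + (d - cc - 1) := by omega
              have hre2 : β = (β - (d - cc - 1)) + (d - cc - 1) := by omega
              rw [hre, hre2] at hcs'
              exact cs_spl_right hcs' (by omega) (by omega)
                (fun h' => absurd h' (by omega))
        have h := hza.2 _ (by split <;> omega) hJ
        by_cases hjc : j ≤ cc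
        · rw [if_pos hjc] at h; rwa [spl_le (by omega)]
        · rw [if_neg hjc] at h; rwa [spl_gt (by omega)]
      · rw [spl_gt (by omega)]
        congr 1
        omega
  case pos =>
    have hHcu : kH cc = und := hxUndL hxL
    by_cases hyL : φ d ∈ c.L
    case neg =>
      -- new edge bwd  y → x  (x ∈ L, y ∉ L), e = d - cc - 1
      have hHd : kH (d-1) = bwd := hyNund hyL
      have hdyx : c.H.dir (φ d) (φ cc) :=
        c.Hdir.mpr ⟨c.feas2' hyL hdy hdR hxL hdx hR, fun h => hyL h.1⟩
      refine ⟨n - (d - cc - 1), spl φ cc (d - cc - 1), splk kH bwd cc (d - cc - 1),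
        ?_, ⟨?_, ?_⟩, by omega, spl_le (by omega), ?_⟩
      · refine valid_spl hvH (by omega) ?_
        intro _
        refine ⟨fun h => by simp at h, fun _ => ?_, fun h => by simp at h⟩
        rw [(by omega : cc + 1 + (d - cc - 1) = d)]
        exact hdyx
      · intro p q hpq
        by_cases hqc : q < cc
        · obtain ⟨j, hj1, hj2, hj3⟩ := hza.1 p q (cs_spl_left' (n := n) hpq hqc (by omega))
          exact ⟨j, hj1, hj2, by rwa [spl_le (by omega)]⟩
        · by_cases hpc : cc + 1 < p
          · have hcs2 := cs_spl_right' (n := n) hpq (by omega) (by omega)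
              (fun h => absurd h (by omega))
            obtain ⟨j, hj1, hj2, hj3⟩ := hza.1 _ _ hcs2
            refine ⟨j - (d - cc - 1), by omega, by omega, ?_⟩
            rw [spl_gt (by omega)]
            rwa [(by omega : j - (d - cc - 1) + (d - cc - 1) = j)]
          · obtain ⟨hpq1, hpq2, hpq3, hpq4, hpq5, hpq6⟩ := hpq
            have hpcc : p ≤ cc := by
              rcases Nat.lt_or_ge p (cc+1) with h | h
              · omega
              · exfalso
                rw [(by omega : p - 1 = cc), splk_eq] at hpq5
                simp at hpq5
            have hqcc : q = cc := by
              rcases Nat.lt_trichotomy q cc with h | h | h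
              · omega
              · exact h
              · exfalso
                have h7 := hpq4 cc (by omega) (by omega)
                rw [splk_eq] at h7; simp at h7
            have hcs3 : CS n kH p (d-1) := by
              refine ⟨by omega, by omega, by omega, ?_, ?_, hHd⟩
              · intro i hi1 hi2
                rcases Nat.lt_trichotomy i cc with h | h | h
                · have h7 := hpq4 i hi1 (by omega)
                  rwa [splk_lt h] at h7
                · rw [h]; exact hHcu
                · exact hdipH i h hi2
              · have h7 := hpq5
                rwa [splk_lt (by omega)] at h7
            obtain ⟨j, hj1, hj2, hj3, hj4⟩ := hW _ _ hcs3 (by omega) (by omega)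
            have hjc : j ≤ cc := by omega
            exact ⟨j, hj1, by omega, by rwa [spl_le (by omega)]⟩
      · intro j hj hncp
        have hJ : ¬ CP n kH (if j ≤ cc then j else j + (d - cc - 1)) := by
          intro hcp
          apply hncp
          obtain ⟨α, β, hα, hβ, hcs'⟩ := hcp
          obtain ⟨k1, k2, k3, k4, k5, k6⟩ := hcs'
          have hcs' : CS n kH α β := ⟨k1, k2, k3, k4, k5, k6⟩
          by_cases hjc : j ≤ cc
          · rw [if_pos hjc] at hα hβ
            have hβc : β < cc ∨ β = d - 1 := by
              rcases Nat.lt_trichotomy β cc with h | h | h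
              · exact Or.inl h
              · exfalso; rw [h, hHcu] at k6; simp at k6
              · rcases Nat.lt_trichotomy β (d-1) with h' | h' | h'
                · exfalso; rw [hdipH β h h'] at k6; simp at k6
                · exact Or.inr h'
                · exfalso
                  have h7 := k4 (d-1) (by omega) (by omega)
                  rw [hHd] at h7; simp at h7
            rcases hβc with h | h
            · exact ⟨α, β, hα, hβ, cs_spl_left hcs' h (by omega)⟩
            · refine ⟨α, cc, hα, by omega, ?_⟩
              refine ⟨by omega, by omega, k3, ?_, ?_, ?_⟩
              · intro i hi1 hi2
                rw [splk_lt (by omega)]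
                exact k4 i hi1 (by omega)
              · rw [splk_lt (by omega)]; exact k5
              · rw [splk_eq]
          · rw [if_neg hjc] at hα hβ
            have hαd : d + 1 ≤ α := by
              rcases Nat.lt_trichotomy α (cc+1) with h | h | h
              · exfalso
                have h7 := k4 (d-1) (by omega) (by omega)
                rw [hHd] at h7; simp at h7
              · exfalso
                rw [(by omega : α - 1 = cc), hHcu] at k5; simp at k5
              · rcases Nat.lt_or_ge α (d+1) with h' | h'
                · exfalso
                  rcases Nat.lt_or_ge (α-1) (d-1) with h9 | h9
                  · have h10 := hdipH (α-1) (by omega) h9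
                    rw [k5] at h10; simp at h10
                  · rw [(by omega : α - 1 = d - 1), hHd] at k5; simp at k5
                · exact h'
            refine ⟨α - (d - cc - 1), β - (d - cc - 1), by omega, by omega, ?_⟩
            have hre : α = (α - (d - cc - 1)) + (d - cc - 1) := by omega
            have hre2 : β = (β - (d - cc - 1)) + (d - cc - 1) := by omega
            rw [hre, hre2] at hcs'
            exact cs_spl_right hcs' (by omega) (by omega)
              (fun h' => absurd h' (by omega))
        have h := hza.2 _ (by split <;> omega) hJ
        by_cases hjc : j ≤ cc
        · rw [if_pos hjc] at h; rwa [spl_le (by omega)]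
        · rw [if_neg hjc] at h; rwa [spl_gt (by omega)]
      · rw [spl_gt (by omega)]
        congr 1
        omega
    case pos =>
      have hHdu : kH (d-1) = und := hyUndL hyL
      by_cases hxy : φ cc = φ d
      case neg =>
        -- new edge und x − y, e = d - cc - 1
        have hundH : c.H.undir (φ cc) (φ d) :=
          c.GundH (c.compl' hxL hyL hdx hR hdy hdR hxy)
        refine ⟨n - (d - cc - 1), spl φ cc (d - cc - 1), splk kH und cc (d - cc - 1),
          ?_, ⟨?_, ?_⟩, by omega, spl_le (by omega), ?_⟩
        · refine valid_spl hvH (by omega) ?_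
          intro _
          refine ⟨fun h => by simp at h, fun h => by simp at h, fun _ => ?_⟩
          rw [(by omega : cc + 1 + (d - cc - 1) = d)]
          exact hundH
        · intro p q hpq
          by_cases hqc : q < cc
          · obtain ⟨j, hj1, hj2, hj3⟩ := hza.1 p q (cs_spl_left' (n := n) hpq hqc (by omega))
            exact ⟨j, hj1, hj2, by rwa [spl_le (by omega)]⟩
          · by_cases hpc : cc + 1 < p
            · have hcs2 := cs_spl_right' (n := n) hpq (by omega) (by omega)
                (fun h => absurd h (by omega))
              obtain ⟨j, hj1, hj2, hj3⟩ := hza.1 _ _ hcs2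
              refine ⟨j - (d - cc - 1), by omega, by omega, ?_⟩
              rw [spl_gt (by omega)]
              rwa [(by omega : j - (d - cc - 1) + (d - cc - 1) = j)]
            · obtain ⟨hpq1, hpq2, hpq3, hpq4, hpq5, hpq6⟩ := hpq
              have hpcc : p ≤ cc := by
                rcases Nat.lt_or_ge p (cc+1) with h | h
                · omega
                · exfalso
                  rw [(by omega : p - 1 = cc), splk_eq] at hpq5
                  simp at hpq5
              have hqcc : cc + 1 ≤ q := by
                rcases Nat.lt_trichotomy q cc with h | h | h
                · omega
                · exfalso; rw [h, splk_eq] at hpq6; simp at hpq6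
                · omega
              have hqe : kH (q + (d - cc - 1)) = bwd := by
                have h := hpq6; rwa [splk_gt (by omega)] at h
              have hcs3 : CS n kH p (q + (d - cc - 1)) := by
                refine ⟨by omega, by omega, by omega, ?_, ?_, hqe⟩
                · intro i hi1 hi2
                  rcases Nat.lt_trichotomy i cc with h | h | h
                  · have h7 := hpq4 i hi1 (by omega)
                    rwa [splk_lt h] at h7
                  · rw [h]; exact hHcu
                  · rcases Nat.lt_or_ge i (d-1) with h' | h'
                    · exact hdipH i h h'
                    · rcases Nat.lt_or_ge i d with h'' | h''
                      · rw [(by omega : i = d - 1)]; exact hHdu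
                      · have h7 := hpq4 (i - (d - cc - 1)) (by omega) (by omega)
                        rw [splk_gt (by omega)] at h7
                        rwa [(by omega : i - (d - cc - 1) + (d - cc - 1) = i)] at h7
                · have h7 := hpq5
                  rwa [splk_lt (by omega)] at h7
              obtain ⟨j, hj1, hj2, hj3, hj4⟩ := hW _ _ hcs3 (by omega) (by omega)
              rcases hj3 with h | h
              · exact ⟨j, hj1, by omega, by rwa [spl_le (by omega)]⟩
              · refine ⟨j - (d - cc - 1), by omega, by omega, ?_⟩
                rw [spl_gt (by omega)]
                rwa [(by omega : j - (d - cc - 1) + (d - cc - 1) = j)]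
        · intro j hj hncp
          have hJ : ¬ CP n kH (if j ≤ cc then j else j + (d - cc - 1)) := by
            intro hcp
            apply hncp
            obtain ⟨α, β, hα, hβ, hcs'⟩ := hcp
            obtain ⟨k1, k2, k3, k4, k5, k6⟩ := hcs'
            have hcs' : CS n kH α β := ⟨k1, k2, k3, k4, k5, k6⟩
            have hnund : ∀ i, cc ≤ i → i < d → kH i ≠ bwd ∧ kH i ≠ fwd := by
              intro i hi1 hi2
              rcases Nat.lt_trichotomy i cc with h | h | h
              · omega
              · rw [← h] at hHcu; rw [hHcu]; simp
              · rcases Nat.lt_or_ge i (d-1) with h' | h'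
                · rw [hdipH i h h']; simp
                · rw [(by omega : i = d - 1), hHdu]; simp
            by_cases hjc : j ≤ cc
            · rw [if_pos hjc] at hα hβ
              have hβc : β < cc ∨ d ≤ β := by
                rcases Nat.lt_or_ge β cc with h | h
                · exact Or.inl h
                · rcases Nat.lt_or_ge β d with h' | h'
                  · exact absurd k6 (hnund β h h').1
                  · exact Or.inr h'
              rcases hβc with h | h
              · exact ⟨α, β, hα, hβ, cs_spl_left hcs' h (by omega)⟩
              · -- spanning
                refine ⟨α, β - (d - cc - 1), hα, by omega, ?_⟩
                refine ⟨by omega, by omega, k3, ?_, ?_, ?_⟩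
                · intro i hi1 hi2
                  rcases Nat.lt_trichotomy i cc with h' | h' | h'
                  · rw [splk_lt h']; exact k4 i hi1 (by omega)
                  · rw [h', splk_eq]
                  · rw [splk_gt h']
                    exact k4 (i + (d - cc - 1)) (by omega) (by omega)
                · rw [splk_lt (by omega)]; exact k5
                · rw [splk_gt (by omega)]
                  rwa [(by omega : β - (d - cc - 1) + (d - cc - 1) = β)]
            · rw [if_neg hjc] at hα hβ
              have hαd : α ≤ cc ∨ d + 1 ≤ α := by
                rcases Nat.lt_or_ge α (cc+1) with h | h
                · exact Or.inl (by omega)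
                · rcases Nat.lt_or_ge α (d+1) with h' | h'
                  · exact absurd k5 (hnund (α-1) (by omega) (by omega)).2
                  · exact Or.inr h'
              rcases hαd with h | h
              · -- spanning, position j
                refine ⟨α, β - (d - cc - 1), by omega, by omega, ?_⟩
                refine ⟨by omega, by omega, k3, ?_, ?_, ?_⟩
                · intro i hi1 hi2
                  rcases Nat.lt_trichotomy i cc with h' | h' | h'
                  · rw [splk_lt h']; exact k4 i hi1 (by omega)
                  · rw [h', splk_eq]
                  · rw [splk_gt h']
                    exact k4 (i + (d - cc - 1)) (by omega) (by omega)
                · rw [splk_lt (by omega)]; exact k5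
                · rw [splk_gt (by omega)]
                  rwa [(by omega : β - (d - cc - 1) + (d - cc - 1) = β)]
              · refine ⟨α - (d - cc - 1), β - (d - cc - 1), by omega, by omega, ?_⟩
                have hre : α = (α - (d - cc - 1)) + (d - cc - 1) := by omega
                have hre2 : β = (β - (d - cc - 1)) + (d - cc - 1) := by omega
                rw [hre, hre2] at hcs'
                exact cs_spl_right hcs' (by omega) (by omega)
                  (fun h' => absurd h' (by omega))
          have h := hza.2 _ (by split <;> omega) hJ
          by_cases hjc : j ≤ cc
          · rw [if_pos hjc] at h; rwa [spl_le (by omega)]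
          · rw [if_neg hjc] at h; rwa [spl_gt (by omega)]
        · rw [spl_gt (by omega)]
          congr 1
          omega
      case pos =>
        -- collapse: e = d - cc, κ = kH (cc + (d - cc))
        have hge : ∀ i, cc ≤ i →
            splk kH (kH (cc + (d - cc))) cc (d - cc) i = kH (i + (d - cc)) := by
          intro i hi
          rcases Nat.lt_or_ge cc i with h | h
          · exact splk_gt h
          · rw [(by omega : i = cc), splk_eq]
        refine ⟨n - (d - cc), spl φ cc (d - cc),
          splk kH (kH (cc + (d - cc))) cc (d - cc),
          ?_, ⟨?_, ?_⟩, by omega, spl_le (by omega), ?_⟩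
        · refine valid_spl hvH (by omega) ?_
          intro hlt
          have hdn' : d < n := by omega
          rw [(by omega : cc + (d - cc) = d), (by omega : cc + 1 + (d - cc) = d + 1)]
          obtain ⟨w1, w2, w3⟩ := hvH d hdn'
          refine ⟨fun h => ?_, fun h => ?_, fun h => ?_⟩
          · rw [hxy]; exact w1 h
          · rw [hxy]; exact w2 h
          · rw [hxy]; exact w3 h
        · intro p q hpq
          by_cases hqc : q < cc
          · obtain ⟨j, hj1, hj2, hj3⟩ := hza.1 p q (cs_spl_left' (n := n) hpq hqc (by omega))
            exact ⟨j, hj1, hj2, by rwa [spl_le (by omega)]⟩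
          · by_cases hpc : cc < p
            · have hcs2 := cs_spl_right' (n := n) hpq (by omega) hpc (fun _ => rfl)
              obtain ⟨j, hj1, hj2, hj3⟩ := hza.1 _ _ hcs2
              refine ⟨j - (d - cc), by omega, by omega, ?_⟩
              rw [spl_gt (by omega)]
              rwa [(by omega : j - (d - cc) + (d - cc) = j)]
            · obtain ⟨hpq1, hpq2, hpq3, hpq4, hpq5, hpq6⟩ := hpq
              have hpcc : p ≤ cc := by omega
              have hqe : kH (q + (d - cc)) = bwd := by
                have h := hpq6; rwa [hge q (by omega)] at h
              have hcs3 : CS n kH p (q + (d - cc)) := by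
                refine ⟨by omega, by omega, by omega, ?_, ?_, hqe⟩
                · intro i hi1 hi2
                  rcases Nat.lt_trichotomy i cc with h | h | h
                  · have h7 := hpq4 i hi1 (by omega)
                    rwa [splk_lt h] at h7
                  · rw [h]; exact hHcu
                  · rcases Nat.lt_or_ge i (d-1) with h' | h'
                    · exact hdipH i h h'
                    · rcases Nat.lt_or_ge i d with h'' | h''
                      · rw [(by omega : i = d - 1)]; exact hHdu
                      · have h7 := hpq4 (i - (d - cc)) (by omega) (by omega)
                        rw [hge (i - (d - cc)) (by omega)] at h7
                        rwa [(by omega : i - (d - cc) + (d - cc) = i)] at h7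
                · have h7 := hpq5
                  rwa [splk_lt (by omega)] at h7
              obtain ⟨j, hj1, hj2, hj3, hj4⟩ := hW _ _ hcs3 (by omega) (by omega)
              rcases hj3 with h | h
              · exact ⟨j, hj1, by omega, by rwa [spl_le (by omega)]⟩
              · refine ⟨j - (d - cc), by omega, by omega, ?_⟩
                rcases Nat.lt_or_ge cc (j - (d - cc)) with h' | h'
                · rw [spl_gt h']
                  rwa [(by omega : j - (d - cc) + (d - cc) = j)]
                · rw [spl_le h']
                  rw [(by omega : j - (d - cc) = cc), hxy]
                  rwa [(by omega : j = d)] at hj4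
        · intro j hj hncp
          have hJ : ¬ CP n kH (if j ≤ cc then j else j + (d - cc)) := by
            intro hcp
            apply hncp
            obtain ⟨α, β, hα, hβ, hcs'⟩ := hcp
            obtain ⟨k1, k2, k3, k4, k5, k6⟩ := hcs'
            have hcs' : CS n kH α β := ⟨k1, k2, k3, k4, k5, k6⟩
            have hnund : ∀ i, cc ≤ i → i < d → kH i ≠ bwd ∧ kH i ≠ fwd := by
              intro i hi1 hi2
              rcases Nat.lt_trichotomy i cc with h | h | h
              · omega
              · rw [← h] at hHcu; rw [hHcu]; simp
              · rcases Nat.lt_or_ge i (d-1) with h' | h'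
                · rw [hdipH i h h']; simp
                · rw [(by omega : i = d - 1), hHdu]; simp
            by_cases hjc : j ≤ cc
            · rw [if_pos hjc] at hα hβ
              have hβc : β < cc ∨ d ≤ β := by
                rcases Nat.lt_or_ge β cc with h | h
                · exact Or.inl h
                · rcases Nat.lt_or_ge β d with h' | h'
                  · exact absurd k6 (hnund β h h').1
                  · exact Or.inr h'
              rcases hβc with h | h
              · exact ⟨α, β, hα, hβ, cs_spl_left hcs' h (by omega)⟩
              · refine ⟨α, β - (d - cc), hα, by omega, ?_⟩
                refine ⟨by omega, by omega, k3, ?_, ?_, ?_⟩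
                · intro i hi1 hi2
                  rcases Nat.lt_or_ge i cc with h' | h'
                  · rw [splk_lt h']; exact k4 i hi1 (by omega)
                  · rw [hge i h']
                    exact k4 (i + (d - cc)) (by omega) (by omega)
                · rw [splk_lt (by omega)]; exact k5
                · rw [hge (β - (d - cc)) (by omega)]
                  rwa [(by omega : β - (d - cc) + (d - cc) = β)]
            · rw [if_neg hjc] at hα hβ
              have hαd : α ≤ cc ∨ d + 1 ≤ α := by
                rcases Nat.lt_or_ge α (cc+1) with h | h
                · exact Or.inl (by omega)
                · rcases Nat.lt_or_ge α (d+1) with h' | h'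
                  · exact absurd k5 (hnund (α-1) (by omega) (by omega)).2
                  · exact Or.inr h'
              rcases hαd with h | h
              · refine ⟨α, β - (d - cc), by omega, by omega, ?_⟩
                refine ⟨by omega, by omega, k3, ?_, ?_, ?_⟩
                · intro i hi1 hi2
                  rcases Nat.lt_or_ge i cc with h' | h'
                  · rw [splk_lt h']; exact k4 i hi1 (by omega)
                  · rw [hge i h']
                    exact k4 (i + (d - cc)) (by omega) (by omega)
                · rw [splk_lt (by omega)]; exact k5
                · rw [hge (β - (d - cc)) (by omega)]
                  rwa [(by omega : β - (d - cc) + (d - cc) = β)]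
              · refine ⟨α - (d - cc), β - (d - cc), by omega, by omega, ?_⟩
                have hre : α = (α - (d - cc)) + (d - cc) := by omega
                have hre2 : β = (β - (d - cc)) + (d - cc) := by omega
                rw [hre, hre2] at hcs'
                exact cs_spl_right hcs' (by omega) (by omega) (fun _ => rfl)
          have h := hza.2 _ (by split <;> omega) hJ
          by_cases hjc : j ≤ cc
          · rw [if_pos hjc] at h; rwa [spl_le (by omega)]
          · rw [if_neg hjc] at h; rwa [spl_gt (by omega)]
        · rcases Nat.lt_or_ge cc (n - (d - cc)) with h | h
          · rw [spl_gt h]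
            congr 1
            omega
          · have hn1 : n - (d - cc) = cc := by omega
            rw [spl_le h, hn1, hxy]
            congr 1
            omega

end Ctx
end FM
namespace FM
open HybridGraph HybridGraph.EdgeKind

variable {V : Type}

namespace Ctx

variable (c : Ctx V)

lemma dir2_aux (X Y Z : Set V) : ∀ n, ∀ φ : ℕ → V, ∀ kH : ℕ → EdgeKind,
    Valid c.H n φ kH → φ 0 ∈ X → φ n ∈ Y → ZA n φ kH Z → EA c.G X Y Z := by
  intro n
  induction n using Nat.strong_induction_on with
  | _ n IH =>
    intro φ kH hv h0 hn hza
    classical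
    obtain ⟨kG, hp⟩ := c.pair_of_H hv
    have hvG := hp.1
    have hGH := hp.2.2.2.1   -- kG und → kH und
    have hHG := hp.2.2.1     -- kH ≠ und → kG = kH
    have h5 := hp.2.2.2.2
    by_cases hC1 : ∀ a b, CS n kG a b → ∃ j, a ≤ j ∧ j ≤ b ∧ φ j ∈ Z
    · by_cases hC2 : ∀ j, j ≤ n → φ j ∈ Z → CP n kG j
      · exact ⟨n, φ, kG, hp.1, h0, hn, hC1,
          fun j hj hncp hz => hncp (hC2 j hj hz)⟩
      · -- a Z-node j₀ that is not a kG-collider position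
        push_neg at hC2
        obtain ⟨j₀, hj₀n, hz, hncp⟩ := hC2
        have hcpH : CP n kH j₀ := by
          by_contra h
          exact hza.2 j₀ hj₀n h hz
        obtain ⟨A, B, hA, hB, hcsH⟩ := hcpH
        obtain ⟨g1, g2, g3, g4, g5, g6⟩ := hcsH
        have hcsH : CS n kH A B := ⟨g1, g2, g3, g4, g5, g6⟩
        -- the maximal kG-undirected run [p, q] around j₀
        have hexp : ∃ p, p ≤ j₀ ∧ ∀ i, p ≤ i → i < j₀ → kG i = und :=
          ⟨j₀, le_refl _, fun i h1 h2 => absurd (lt_of_le_of_lt h1 h2) (lt_irrefl _)⟩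
        set p := Nat.find hexp with hpdef
        obtain ⟨hpj, hpund⟩ : p ≤ j₀ ∧ ∀ i, p ≤ i → i < j₀ → kG i = und :=
          Nat.find_spec hexp
        have hAp : A ≤ p := by
          by_contra h
          push_neg at h
          have h1 : kG (A-1) = und := hpund (A-1) (by omega) (by omega)
          have h2 := hGH (A-1) (by omega) h1
          rw [g5] at h2; simp at h2
        have hpne : A < p → kG (p-1) ≠ und := by
          intro h hu
          have hmin := Nat.find_min hexp (m := p - 1) (by omega)
          apply hmin
          refine ⟨by omega, ?_⟩
          intro i hi1 hi2
          rcases Nat.lt_or_ge i p with h' | h'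
          · rwa [(by omega : i = p - 1)]
          · exact hpund i h' hi2
        have hpA_fwd : p = A → kG (p-1) = fwd := by
          intro h
          rw [h, hHG (A-1) (by omega) (by rw [g5]; simp)]
          exact g5
        have hexq : ∃ q, j₀ ≤ q ∧ (q = n ∨ kG q ≠ und) := ⟨n, hj₀n, Or.inl rfl⟩
        set q := Nat.find hexq with hqdef
        obtain ⟨hjq, hqor⟩ : j₀ ≤ q ∧ (q = n ∨ kG q ≠ und) := Nat.find_spec hexq
        have hqund : ∀ i, j₀ ≤ i → i < q → kG i = und := by
          intro i h1 h2
          by_contra hu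
          exact Nat.find_min hexq (m := i) h2 ⟨h1, Or.inr hu⟩
        have hqB : q ≤ B := by
          by_contra h
          push_neg at h
          have h1 : kG B = und := hqund B hB (by omega)
          have h2 := hGH B (by omega) h1
          rw [g6] at h2; simp at h2
        have hqnund : kG q ≠ und := by
          rcases hqor with h | h
          · omega
          · exact h
        have hnotboth : ¬(kG (p-1) = fwd ∧ kG q = bwd) := by
          rintro ⟨hf, hb⟩
          refine hncp ⟨p, q, hpj, hjq, by omega, by omega, by omega, ?_, hf, hb⟩
          intro i hi1 hi2
          rcases Nat.lt_or_ge i j₀ with h | h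
          · exact hpund i hi1 h
          · exact hqund i h hi2
        have hmrg_p : kG (p-1) = bwd → (φ p ∈ c.L ∧ φ (p-1) ∈ c.R ∧ A < p) := by
          intro hb
          have hAplt : A < p := by
            rcases Nat.lt_or_ge A p with h | h
            · exact h
            · exfalso
              have := hpA_fwd (by omega)
              rw [hb] at this; simp at this
          have hu : kH (p-1) = und := g4 (p-1) (by omega) (by omega)
          rcases h5 (p-1) (by omega) ⟨hu, by rw [hb]; simp⟩ with ⟨h', _, _⟩ | ⟨_, ha, hbR⟩
          · rw [hb] at h'; simp at h'
          · rw [(by omega : p - 1 + 1 = p)] at ha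
            exact ⟨ha, hbR, hAplt⟩
        have hmrg_q : kG q = fwd → (φ q ∈ c.L ∧ φ (q+1) ∈ c.R ∧ q < B) := by
          intro hf
          have hqBlt : q < B := by
            rcases Nat.lt_or_ge q B with h | h
            · exact h
            · have hqB' : q = B := by omega
              exfalso
              have := hHG B (by omega) (by rw [g6]; simp)
              rw [hqB', this, g6] at hf; simp at hf
          have hu : kH q = und := g4 q (by omega) (by omega)
          rcases h5 q (by omega) ⟨hu, by rw [hf]; simp⟩ with ⟨_, ha, hbR⟩ | ⟨h', _, _⟩
          · exact ⟨ha, hbR, hqBlt⟩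
          · rw [hf] at h'; simp at h'
        rcases kind_cases (kG (p-1)) with hf | hf | hf
        · -- left flank fine ⇒ right flank must fail : kG q = fwd
          have hqf : kG q = fwd := by
            rcases kind_cases (kG q) with h | h | h
            · exact h
            · exact absurd ⟨hf, h⟩ hnotboth
            · exact absurd h hqnund
          obtain ⟨hqL, hq1R, hqB'⟩ := hmrg_q hqf
          -- dip to the right : [q+1, q₂]
          have hexq2 : ∃ r, q + 1 ≤ r ∧ (r = n ∨ kG r ≠ und) := ⟨n, by omega, Or.inl rfl⟩
          set q₂ := Nat.find hexq2 with hq2def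
          obtain ⟨hq21, hq2or⟩ : q + 1 ≤ q₂ ∧ (q₂ = n ∨ kG q₂ ≠ und) :=
            Nat.find_spec hexq2
          have hq2und : ∀ i, q + 1 ≤ i → i < q₂ → kG i = und := by
            intro i h1 h2
            by_contra hu
            exact Nat.find_min hexq2 (m := i) h2 ⟨h1, Or.inr hu⟩
          have hq2B : q₂ ≤ B := by
            by_contra h
            push_neg at h
            have h1 : kG B = und := hq2und B (by omega) (by omega)
            have h2 := hGH B (by omega) h1
            rw [g6] at h2; simp at h2
          have hq2nund : kG q₂ ≠ und := by
            rcases hq2or with h | h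
            · omega
            · exact h
          have hq2R : φ q₂ ∈ c.R := by
            have hseg := c.seg_mem hvG c.hRcomp (i := q+1) (j := q₂) hq21
              (by omega) hq2und
            exact hseg.mp hq1R
          have hq2bwd : kG q₂ = bwd := by
            rcases Nat.lt_or_ge q₂ B with h | h
            · have hu : kH q₂ = und := g4 q₂ (by omega) h
              rcases h5 q₂ (by omega) ⟨hu, hq2nund⟩ with ⟨_, hL, _⟩ | ⟨hk, _, _⟩
              · exact absurd hL (fun hL' => c.disj_LR hL' hq2R)
              · exact hk
            · have hq2B' : q₂ = B := by omega
              rw [hq2B', hHG B (by omega) (by rw [g6]; simp)]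
              exact g6
          -- surgery with cc = q, d = q₂ + 1
          have hW : ∀ α β, CS n kH α β → α ≤ q₂ + 1 - 1 → q + 1 ≤ β →
              ∃ j, α ≤ j ∧ j ≤ β ∧ (j ≤ q ∨ q₂ + 1 ≤ j) ∧ φ j ∈ Z := by
            intro α β hcs' hα hβ
            have hov := cs_unique hcs' hcsH
              (p := max α (q+1)) (le_max_left _ _)
              (max_le hcs'.1 hβ)
              (le_trans (by omega : A ≤ q + 1) (le_max_right α (q+1)))
              (max_le (by omega : α ≤ B) (by omega : q + 1 ≤ B))
            obtain ⟨h1', h2'⟩ := hov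
            subst h1'; subst h2'
            exact ⟨j₀, hA, hB, Or.inl hjq, hz⟩
          obtain ⟨n₁, φ₁, k₁, hv₁, hza₁, hlt, he0, heN⟩ :=
            c.surg2 hp hza (cc := q) (d := q₂ + 1) (by omega) (by omega)
              hqf (by rwa [(by omega : q₂ + 1 - 1 = q₂)])
              (fun i h1 h2 => hq2und i (by omega) (by omega)) hq1R hW
          exact IH n₁ hlt φ₁ k₁ hv₁ (by rw [he0]; exact h0)
            (by rw [heN]; exact hn) hza₁
        · -- left flank fails : kG (p-1) = bwd
          obtain ⟨hpL, hp1R, hAp'⟩ := hmrg_p hf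
          -- dip to the left : [p₂, p-1]
          have hexp2 : ∃ r, r ≤ p - 1 ∧ ∀ i, r ≤ i → i < p - 1 → kG i = und :=
            ⟨p-1, le_refl _, fun i h1 h2 => absurd (lt_of_le_of_lt h1 h2) (lt_irrefl _)⟩
          set p₂ := Nat.find hexp2 with hp2def
          obtain ⟨hp21, hp2und⟩ : p₂ ≤ p - 1 ∧ ∀ i, p₂ ≤ i → i < p - 1 → kG i = und :=
            Nat.find_spec hexp2
          have hAp2 : A ≤ p₂ := by
            by_contra h
            push_neg at h
            have h1 : kG (A-1) = und := hp2und (A-1) (by omega) (by omega)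
            have h2 := hGH (A-1) (by omega) h1
            rw [g5] at h2; simp at h2
          have hp2R : φ p₂ ∈ c.R := by
            have hseg := c.seg_mem hvG c.hRcomp (i := p₂) (j := p-1) hp21
              (by omega) hp2und
            exact hseg.mpr hp1R
          have hp2fwd : kG (p₂ - 1) = fwd := by
            rcases Nat.lt_or_ge A p₂ with h | h
            · have hnu : kG (p₂ - 1) ≠ und := by
                intro hu
                apply Nat.find_min hexp2 (m := p₂ - 1) (by omega)
                refine ⟨by omega, ?_⟩
                intro i hi1 hi2
                rcases Nat.lt_or_ge i p₂ with h' | h'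
                · rwa [(by omega : i = p₂ - 1)]
                · exact hp2und i h' hi2
              have hu : kH (p₂ - 1) = und := g4 (p₂ - 1) (by omega) (by omega)
              rcases h5 (p₂ - 1) (by omega) ⟨hu, hnu⟩ with ⟨hk, _, _⟩ | ⟨_, hL, _⟩
              · exact hk
              · exfalso
                rw [(by omega : p₂ - 1 + 1 = p₂)] at hL
                exact c.disj_LR hL hp2R
            · have hp2A : p₂ = A := by omega
              rw [hp2A, hHG (A-1) (by omega) (by rw [g5]; simp)]
              exact g5
          have hW : ∀ α β, CS n kH α β → α ≤ p - 1 → p₂ - 1 + 1 ≤ β →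
              ∃ j, α ≤ j ∧ j ≤ β ∧ (j ≤ p₂ - 1 ∨ p ≤ j) ∧ φ j ∈ Z := by
            intro α β hcs' hα hβ
            have hov := cs_unique hcs' hcsH
              (p := max α p₂) (le_max_left _ _)
              (max_le hcs'.1 (by omega : p₂ ≤ β))
              (le_trans hAp2 (le_max_right α p₂))
              (max_le (by omega : α ≤ B) (by omega : p₂ ≤ B))
            obtain ⟨h1', h2'⟩ := hov
            subst h1'; subst h2'
            exact ⟨j₀, hA, hB, Or.inr (by omega), hz⟩
          obtain ⟨n₁, φ₁, k₁, hv₁, hza₁, hlt, he0, heN⟩ :=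
            c.surg2 hp hza (cc := p₂ - 1) (d := p) (by omega) (by omega)
              hp2fwd hf
              (fun i h1 h2 => hp2und i (by omega) h2)
              (by rwa [(by omega : p₂ - 1 + 1 = p₂)]) hW
          exact IH n₁ hlt φ₁ k₁ hv₁ (by rw [he0]; exact h0)
            (by rw [heN]; exact hn) hza₁
        · -- kG (p-1) cannot be und
          exfalso
          rcases Nat.lt_or_ge A p with h | h
          · exact hpne h hf
          · have := hpA_fwd (by omega)
            rw [hf] at this; simp at this
    · -- a kG-collider section with no Z node
      push_neg at hC1
      obtain ⟨a, b, hcs, hnoz⟩ := hC1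
      obtain ⟨hab, hbn, ha0, hint, hfw, hbw⟩ := hcs
      have hM : kH (a-1) = und ∨ kH b = und := by
        by_contra h
        push_neg at h
        have hcsH : CS n kH a b := by
          refine ⟨hab, hbn, ha0, ?_, ?_, ?_⟩
          · intro i h1 h2
            exact hGH i (by omega) (hint i h1 h2)
          · rw [← hHG (a-1) (by omega) h.1]; exact hfw
          · rw [← hHG b (by omega) h.2]; exact hbw
        obtain ⟨j, hj1, hj2, hj3⟩ := hza.1 _ _ hcsH
        exact hnoz j hj1 hj2 hj3
      have haR : φ a ∈ c.R := by
        rcases hM with h | h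
        · rcases h5 (a-1) (by omega) ⟨h, by rw [hfw]; simp⟩ with ⟨_, _, hR⟩ | ⟨hk, _, _⟩
          · rwa [(by omega : a - 1 + 1 = a)] at hR
          · rw [hfw] at hk; simp at hk
        · rcases h5 b (by omega) ⟨h, by rw [hbw]; simp⟩ with ⟨hk, _, _⟩ | ⟨_, _, hR⟩
          · rw [hbw] at hk; simp at hk
          · have hseg := c.seg_mem hvG c.hRcomp (i := a) (j := b) hab (by omega) hint
            exact hseg.mpr hR
      have hW : ∀ α β, CS n kH α β → α ≤ b + 1 - 1 → a - 1 + 1 ≤ β →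
          ∃ j, α ≤ j ∧ j ≤ β ∧ (j ≤ a - 1 ∨ b + 1 ≤ j) ∧ φ j ∈ Z := by
        intro α β hcs' hα hβ
        obtain ⟨j, hj1, hj2, hj3⟩ := hza.1 _ _ hcs'
        refine ⟨j, hj1, hj2, ?_, hj3⟩
        by_contra h
        push_neg at h
        exact hnoz j (by omega) (by omega) hj3
      obtain ⟨n₁, φ₁, k₁, hv₁, hza₁, hlt, he0, heN⟩ :=
        c.surg2 hp hza (cc := a - 1) (d := b + 1) (by omega) (by omega)
          hfw (by rwa [(by omega : b + 1 - 1 = b)])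
          (fun i h1 h2 => hint i (by omega) (by omega))
          (by rwa [(by omega : a - 1 + 1 = a)]) hW
      exact IH n₁ hlt φ₁ k₁ hv₁ (by rw [he0]; exact h0)
        (by rw [heN]; exact hn) hza₁

lemma dir2 (X Y Z : Set V) (h : EA c.H X Y Z) : EA c.G X Y Z := by
  obtain ⟨n, φ, kH, hv, h0, hn, hza⟩ := h
  exact c.dir2_aux X Y Z n φ kH hv h0 hn hza

end Ctx
end FM
/-- a feasible merging of two components of a chain graph yields
a chain graph with the same induced independence model. -/
theorem feasibleMerge_isChainGraph_and_sep_iff [Fintype V] (G H : HybridGraph V)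
    (hG : G.IsChainGraph) (hmerge : IsFeasibleMerge G H) :
    H.IsChainGraph ∧
    ∀ X Y Z : Set V, Disjoint X Y → Disjoint X Z → Disjoint Y Z →
      (G.Sep X Y Z ↔ H.Sep X Y Z) := by
  obtain ⟨f, hf⟩ := hG
  obtain ⟨L, R, hLc, hRc, hLR, hPne, hcompl, hfeas, hHdef⟩ := hmerge
  let c : FM.Ctx V := ⟨G, H, L, R, f, hf, hLc, hRc, hPne, hcompl, hfeas, hHdef⟩
  refine ⟨c.H_isChainGraph, ?_⟩
  intro X Y Z _ _ _
  constructor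
  · intro hsep
    by_contra h
    exact (FM.ea_iff_not_sep G X Y Z).mp
      (c.dir2 X Y Z ((FM.ea_iff_not_sep H X Y Z).mpr h)) hsep
  · intro hsep
    by_contra h
    exact (FM.ea_iff_not_sep H X Y Z).mp
      (c.dir1 X Y Z ((FM.ea_iff_not_sep G X Y Z).mpr h)) hsep
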